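/- arXiv:math/0605515 — 7 statements merged into one kernel-verified Lean document; each statement's English description precedes it below -/
import Mathlib

section
/- Let X be a compact Hausdorff space and D a separable unital C(X)-algebra such that for every x ∈ X the unit of the fibre D_x = D/I_x is properly infinite; concretely, for every x ∈ X there exist v, w ∈ D with v*v − 1 ∈ I_x, w*w − 1 ∈ I_x and v*w ∈ I_x. Then there exists a positive integer l such that the unit of M_l(D) is properly infinite; that is, there exist V, W ∈ M_l(D) with V*V = 1, W*W = 1 and V*W = 0. -/
set_option linter.unusedSectionVars false
set_option maxHeartbeats 1000000


/-- The fibre ideal `I_x` of a `C(X)`-algebra `A` with structure map `Φ : C(X) → A` at a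
point `x ∈ X`: the closure of the set of finite sums of elements `Φ(f) * a` with
`f x = 0` and `a ∈ A`. -/
def fiberIdeal {X : Type*} [TopologicalSpace X] {A : Type*} [CStarAlgebra A]
    (Φ : C(X, ℂ) →⋆ₐ[ℂ] A) (x : X) : Set A :=
  closure (AddSubmonoid.closure
    {c : A | ∃ (f : C(X, ℂ)) (a : A), f x = 0 ∧ c = Φ f * a} : Set A)

noncomputable section Stmt0Aux

namespace Stmt0Aux

variable {X : Type*} [TopologicalSpace X]

/-- complexification of a real-valued continuous map -/
def rC (g : C(X,ℝ)) : C(X,ℂ) := ⟨fun y => (g y : ℂ), by fun_prop⟩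

@[simp] lemma rC_apply (g : C(X,ℝ)) (y : X) : rC g y = (g y : ℂ) := rfl

lemma rC_mul (g h : C(X,ℝ)) : rC (g * h) = rC g * rC h := by ext y; simp [rC]

lemma rC_one : rC (1 : C(X,ℝ)) = 1 := by ext y; simp [rC]

lemma rC_star (g : C(X,ℝ)) : star (rC g) = rC g := by
  ext y; simp [rC, Complex.conj_ofReal]

lemma rC_sum {ι : Type*} (s : Finset ι) (f : ι → C(X,ℝ)) :
    rC (∑ i ∈ s, f i) = ∑ i ∈ s, rC (f i) := by
  ext y; simp [rC]

/-- pointwise square root of a continuous function -/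
def sqrtC (ψ : C(X,ℝ)) : C(X,ℝ) :=
  ⟨fun y => Real.sqrt (ψ y), Real.continuous_sqrt.comp (map_continuous ψ)⟩

@[simp] lemma sqrtC_apply (ψ : C(X,ℝ)) (y : X) : sqrtC ψ y = Real.sqrt (ψ y) := rfl

lemma sqrtC_sq {ψ : C(X,ℝ)} (h0 : ∀ y, 0 ≤ ψ y) :
    rC ψ = rC (sqrtC ψ) * rC (sqrtC ψ) := by
  ext y
  simp only [rC_apply, ContinuousMap.mul_apply, sqrtC_apply, ← Complex.ofReal_mul,
    Real.mul_self_sqrt (h0 y)]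

/-- `Bump U ψ` : `ψ` is a `[0,1]`-valued function vanishing outside `U`. -/
def Bump (U : Set X) (ψ : C(X,ℝ)) : Prop :=
  (∀ y, ψ y ∈ Set.Icc (0:ℝ) 1) ∧ ∀ y, y ∉ U → ψ y = 0

lemma Bump.mono {U V : Set X} {ψ : C(X,ℝ)} (h : Bump U ψ) (hUV : U ⊆ V) : Bump V ψ :=
  ⟨h.1, fun y hy => h.2 y (fun hyU => hy (hUV hyU))⟩

lemma Bump.sqrtC' {U : Set X} {ψ : C(X,ℝ)} (h : Bump U ψ) : Bump U (sqrtC ψ) := by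
  refine ⟨fun y => ⟨Real.sqrt_nonneg _, Real.sqrt_le_one.2 (h.1 y).2⟩, fun y hy => ?_⟩
  simp [h.2 y hy]

variable [CompactSpace X] [T2Space X] {D : Type*} [CStarAlgebra D]
variable (Φ : C(X, ℂ) →⋆ₐ[ℂ] D)

lemma phi_norm_le {g : C(X,ℝ)} {M : ℝ} (hM : 0 ≤ M) (hg : ∀ y, |g y| ≤ M) :
    ‖Φ (rC g)‖ ≤ M := by
  refine le_trans (NonUnitalStarAlgHom.norm_apply_le Φ (rC g)) ?_
  rw [ContinuousMap.norm_le _ hM]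
  intro y; simpa [rC, Complex.norm_real] using hg y

lemma phi_norm_le_one {g : C(X,ℝ)} (hg : ∀ y, g y ∈ Set.Icc (0:ℝ) 1) : ‖Φ (rC g)‖ ≤ 1 :=
  phi_norm_le Φ zero_le_one (fun y => abs_le.2 ⟨by linarith [(hg y).1], (hg y).2⟩)

lemma phi_sa (g : C(X,ℝ)) : IsSelfAdjoint (Φ (rC g)) := by
  rw [IsSelfAdjoint, ← map_star, rC_star]

section central

variable (hΦ : ∀ f : C(X, ℂ), ∀ d : D, Φ f * d = d * Φ f)
include hΦ

lemma central_shift (ψ : C(X,ℝ)) (A B : D) :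
    A * Φ (rC ψ) * B = A * B * Φ (rC ψ) := by
  rw [mul_assoc, hΦ (rC ψ) B, ← mul_assoc]

lemma star_mul_bump (ψ : C(X,ℝ)) (r : D) :
    star (r * Φ (rC ψ)) = star r * Φ (rC ψ) := by
  rw [star_mul, ← map_star, rC_star, ← hΦ]

lemma comm_move (ψ : C(X,ℝ)) (a b : D) :
    a * (b * Φ (rC ψ)) = Φ (rC ψ) * (a * b) := by
  rw [← hΦ (rC ψ) b, ← mul_assoc, ← hΦ (rC ψ) a, mul_assoc]

lemma comm_move2 (ψ : C(X,ℝ)) (a b : D) :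
    a * (Φ (rC ψ) * b) = Φ (rC ψ) * (a * b) := by
  rw [← mul_assoc, ← hΦ (rC ψ) a, mul_assoc]

/-- splitting a central bump across a product -/
lemma sandwich {ψ τ : C(X,ℝ)} (hft : rC ψ = rC τ * rC τ) (A M B : D) :
    (A * M * B) * Φ (rC ψ) = A * (M * Φ (rC τ)) * (B * Φ (rC τ)) := by
  have h1 : Φ (rC ψ) = Φ (rC τ) * Φ (rC τ) := by rw [hft, map_mul]
  calc (A * M * B) * Φ (rC ψ) = A * M * B * Φ (rC τ) * Φ (rC τ) := by
        rw [h1, ← mul_assoc]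
    _ = A * M * Φ (rC τ) * B * Φ (rC τ) := by rw [central_shift Φ hΦ τ (A * M) B]
    _ = A * (M * Φ (rC τ)) * (B * Φ (rC τ)) := by rw [mul_assoc A M, mul_assoc]

/-- pulling a squared bump together across an element -/
lemma bump_sq_pull {ψ τ : C(X,ℝ)} (hft : rC ψ = rC τ * rC τ) (d : D) :
    Φ (rC τ) * (d * Φ (rC τ)) = d * Φ (rC ψ) := by
  rw [← hΦ (rC τ) d, ← mul_assoc, ← map_mul, ← hft, hΦ]

/-- Lemma A : elements of the fibre ideal can be crushed by bump functions at `x`. -/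
lemma lemA (x : X) {a : D} (ha : a ∈ fiberIdeal Φ x) {ε : ℝ} (hε : 0 < ε) :
    ∃ g : C(X,ℝ), (∀ y, g y ∈ Set.Icc (0:ℝ) 1) ∧ g x = 1 ∧ ‖Φ (rC g) * a‖ ≤ ε := by
  obtain ⟨s, hs, hdist⟩ := Metric.mem_closure_iff.mp ha (ε/2) (by positivity)
  have key : ∀ s, s ∈ (AddSubmonoid.closure
      {c : D | ∃ (f : C(X, ℂ)) (b : D), f x = 0 ∧ c = Φ f * b}) →
      ∀ δ : ℝ, 0 < δ → ∃ g : C(X,ℝ), (∀ y, g y ∈ Set.Icc (0:ℝ) 1) ∧ g x = 1 ∧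
        ‖Φ (rC g) * s‖ ≤ δ := by
    intro s hs
    induction hs using AddSubmonoid.closure_induction with
    | mem c hc =>
      obtain ⟨f, b, hfx, rfl⟩ := hc
      intro δ hδ
      set δ' : ℝ := δ / (‖b‖ + 1) with hδ'def
      have hδ' : 0 < δ' := by positivity
      have hUopen : IsOpen {y | ‖f y‖ < δ'} := by
        have : Continuous fun y => ‖f y‖ := f.continuous.norm
        exact isOpen_lt this continuous_const
      have hxU : x ∈ {y | ‖f y‖ < δ'} := by simp [hfx, hδ']
      obtain ⟨g, hg0, hg1, hgIcc⟩ := exists_continuous_zero_one_of_isClosed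
        (hUopen.isClosed_compl) (isClosed_singleton (x := x))
        (by
          rw [Set.disjoint_left]
          rintro y hy rfl
          exact hy hxU)
      refine ⟨g, hgIcc, hg1 rfl, ?_⟩
      have h1 : Φ (rC g) * (Φ f * b) = Φ (rC g * f) * b := by
        rw [map_mul, mul_assoc]
      rw [h1]
      have h2 : ‖rC g * f‖ ≤ δ' := by
        rw [ContinuousMap.norm_le _ hδ'.le]
        intro y
        by_cases hy : y ∈ {y | ‖f y‖ < δ'}
        · calc ‖(rC g * f) y‖ = ‖(g y : ℂ)‖ * ‖f y‖ := by simp [rC, norm_mul]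
            _ ≤ 1 * δ' := by
                refine mul_le_mul ?_ hy.le (norm_nonneg _) zero_le_one
                simpa [Complex.norm_real, abs_le] using
                  ⟨by linarith [(hgIcc y).1], (hgIcc y).2⟩
            _ = δ' := one_mul _
        · have : g y = 0 := hg0 hy
          simp [this, rC, hδ'.le]
      calc ‖Φ (rC g * f) * b‖ ≤ ‖Φ (rC g * f)‖ * ‖b‖ := norm_mul_le _ _
        _ ≤ δ' * ‖b‖ := by
            refine mul_le_mul_of_nonneg_right ?_ (norm_nonneg _)
            exact le_trans (NonUnitalStarAlgHom.norm_apply_le Φ _) h2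
        _ ≤ δ := by
            rw [hδ'def, div_mul_eq_mul_div, div_le_iff₀ (by positivity)]
            nlinarith [norm_nonneg b, hδ.le]
    | zero =>
      intro δ hδ
      exact ⟨1, fun y => by simp, by simp, by simp [hδ.le]⟩
    | add s₁ s₂ hs₁ hs₂ ih₁ ih₂ =>
      intro δ hδ
      obtain ⟨g₁, hIcc₁, hx₁, hn₁⟩ := ih₁ (δ/2) (by positivity)
      obtain ⟨g₂, hIcc₂, hx₂, hn₂⟩ := ih₂ (δ/2) (by positivity)
      refine ⟨g₁ * g₂, ?_, by simp [hx₁, hx₂], ?_⟩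
      · intro y
        exact ⟨mul_nonneg (hIcc₁ y).1 (hIcc₂ y).1,
          mul_le_one₀ (hIcc₁ y).2 (hIcc₂ y).1 (hIcc₂ y).2⟩
      · have e1 : Φ (rC (g₁ * g₂)) * (s₁ + s₂)
            = Φ (rC g₂) * (Φ (rC g₁) * s₁) + Φ (rC g₁) * (Φ (rC g₂) * s₂) := by
          rw [rC_mul, map_mul, mul_add]
          congr 1
          · rw [← mul_assoc, hΦ (rC g₁) (Φ (rC g₂)), mul_assoc]
          · rw [mul_assoc]
        rw [e1]
        have hA : ‖Φ (rC g₂) * (Φ (rC g₁) * s₁)‖ ≤ δ/2 := by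
          refine le_trans (norm_mul_le _ _) ?_
          calc ‖Φ (rC g₂)‖ * ‖Φ (rC g₁) * s₁‖ ≤ 1 * (δ/2) :=
                mul_le_mul (phi_norm_le_one Φ hIcc₂) hn₁ (norm_nonneg _) zero_le_one
            _ = δ/2 := one_mul _
        have hB : ‖Φ (rC g₁) * (Φ (rC g₂) * s₂)‖ ≤ δ/2 := by
          refine le_trans (norm_mul_le _ _) ?_
          calc ‖Φ (rC g₁)‖ * ‖Φ (rC g₂) * s₂‖ ≤ 1 * (δ/2) :=
                mul_le_mul (phi_norm_le_one Φ hIcc₁) hn₂ (norm_nonneg _) zero_le_one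
            _ = δ/2 := one_mul _
        calc ‖Φ (rC g₂) * (Φ (rC g₁) * s₁) + Φ (rC g₁) * (Φ (rC g₂) * s₂)‖
            ≤ ‖Φ (rC g₂) * (Φ (rC g₁) * s₁)‖ + ‖Φ (rC g₁) * (Φ (rC g₂) * s₂)‖ :=
              norm_add_le _ _
          _ ≤ δ := by linarith
  obtain ⟨g, hIcc, hgx, hns⟩ := key s hs (ε/2) (by positivity)
  refine ⟨g, hIcc, hgx, ?_⟩
  have : Φ (rC g) * a = Φ (rC g) * (a - s) + Φ (rC g) * s := by
    rw [← mul_add, sub_add_cancel]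
  rw [this]
  calc _ ≤ ‖Φ (rC g) * (a - s)‖ + ‖Φ (rC g) * s‖ := norm_add_le _ _
    _ ≤ 1 * (ε/2) + ε/2 := by
        gcongr
        refine le_trans (norm_mul_le _ _) ?_
        refine mul_le_mul (phi_norm_le_one Φ hIcc) ?_ (norm_nonneg _) zero_le_one
        rw [← dist_eq_norm]
        exact hdist.le
    _ ≤ ε := by linarith

end central

/-- domination: a `[0,1]` function vanishing where `g ≤ 1/2` is dominated by `g`. -/
lemma dominate {g ψ : C(X,ℝ)} (hψ : ∀ y, ψ y ∈ Set.Icc (0:ℝ) 1)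
    (hsupp : ∀ y, g y ≤ 1/2 → ψ y = 0) (a : D) :
    ‖Φ (rC ψ) * a‖ ≤ 2 * ‖Φ (rC g) * a‖ := by
  have hden : ∀ y, (1:ℝ)/2 ≤ max (g y) (1/2) := fun y => le_max_right _ _
  have hdenpos : ∀ y, (0:ℝ) < max (g y) (1/2) := fun y =>
    lt_of_lt_of_le (by norm_num) (hden y)
  set θ : C(X,ℝ) := ⟨fun y => ψ y / max (g y) (1/2),
    (map_continuous ψ).div ((map_continuous g).max continuous_const)
      (fun y => (hdenpos y).ne')⟩ with hθdef
  have hθg : θ * g = ψ := by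
    ext y
    simp only [ContinuousMap.mul_apply, hθdef, ContinuousMap.coe_mk]
    rcases le_or_gt (g y) (1/2) with h | h
    · simp [hsupp y h]
    · rw [max_eq_left h.le, div_mul_cancel₀]
      exact (lt_of_le_of_lt (by norm_num) h).ne'
  have h1 : Φ (rC ψ) * a = Φ (rC θ) * (Φ (rC g) * a) := by
    rw [← hθg, rC_mul, map_mul, mul_assoc]
  rw [h1]
  refine le_trans (norm_mul_le _ _) ?_
  refine mul_le_mul (phi_norm_le Φ (by norm_num) ?_) le_rfl (norm_nonneg _) (by norm_num)
  intro y
  rw [hθdef, ContinuousMap.coe_mk, abs_div]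
  rw [div_le_iff₀ (lt_of_lt_of_le (by norm_num) (le_abs_self _ |>.trans' (hden y)))]
  have h1' : |ψ y| ≤ 1 := abs_le.2 ⟨by linarith [(hψ y).1], (hψ y).2⟩
  have h2 : (1:ℝ)/2 ≤ |max (g y) (1/2)| := (hden y).trans (le_abs_self _)
  linarith

/-- normalizer via inverse square root -/
lemma exists_normalizer [Nontrivial D] {a : D} (hsa : IsSelfAdjoint a)
    (hnear : ‖a - 1‖ ≤ 1/2) :
    ∃ t : D, IsSelfAdjoint t ∧ t * a * t = 1 ∧ ‖t‖ ≤ 2 := by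
  have hspec : ∀ r ∈ spectrum ℝ a, (1:ℝ)/2 ≤ r := by
    intro r hr
    have h1 : r - 1 ∈ spectrum ℝ (a - algebraMap ℝ D 1) := by
      rw [← spectrum.sub_singleton_eq]
      exact Set.sub_mem_sub hr rfl
    rw [map_one] at h1
    have := spectrum.norm_le_norm_of_mem h1
    rw [Real.norm_eq_abs, abs_le] at this
    linarith [this.1, le_trans this.2 hnear]
  set f : ℝ → ℝ := fun r => (Real.sqrt r)⁻¹ with hfdef
  have hfc : ContinuousOn f (spectrum ℝ a) := by
    refine ContinuousOn.inv₀ (Real.continuous_sqrt.continuousOn) ?_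
    intro r hr
    have := hspec r hr
    positivity
  refine ⟨cfc f a, cfc_predicate f a, ?_, ?_⟩
  · have e1 : cfc (fun r => f r * r) a = cfc f a * a := by
      rw [cfc_mul f (fun r => r) a hfc (continuousOn_id' _), cfc_id' ℝ a]
    have e2 : cfc (fun r => (f r * r) * f r) a = cfc (fun r => f r * r) a * cfc f a :=
      cfc_mul _ f a (hfc.mul (continuousOn_id' _)) hfc
    rw [← e1, ← e2, ← cfc_one (R := ℝ) a]
    apply cfc_congr
    intro r hr
    have h2 := hspec r hr
    have hs : Real.sqrt r * Real.sqrt r = r := Real.mul_self_sqrt (by linarith)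
    have hsne : Real.sqrt r ≠ 0 := by
      intro h; rw [h, mul_zero] at hs; linarith
    show (Real.sqrt r)⁻¹ * r * (Real.sqrt r)⁻¹ = 1
    rw [← hs]
    field_simp
    rw [Real.sqrt_sq (Real.sqrt_nonneg r)]
  · refine norm_cfc_le (by norm_num) ?_
    intro r hr
    have h2 := hspec r hr
    have h3 : (1:ℝ)/2 ≤ Real.sqrt r := by
      rw [show (1:ℝ)/2 = Real.sqrt ((1/2)^2) by rw [Real.sqrt_sq (by norm_num)]]
      exact Real.sqrt_le_sqrt (by nlinarith)
    rw [hfdef, Real.norm_eq_abs, abs_inv, abs_of_nonneg (Real.sqrt_nonneg r)]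
    rw [inv_le_comm₀ (by linarith) (by norm_num)]
    linarith

/-- `RelPair U v w` : `v, w` are exact isometries with orthogonal ranges relative to `U`. -/
def RelPair (U : Set X) (v w : D) : Prop :=
  ∀ ψ : C(X,ℝ), Bump U ψ →
    (star v * v) * Φ (rC ψ) = Φ (rC ψ) ∧ (star w * w) * Φ (rC ψ) = Φ (rC ψ) ∧
    (star v * w) * Φ (rC ψ) = 0

section base

variable (hΦ : ∀ f : C(X, ℂ), ∀ d : D, Φ f * d = d * Φ f)
include hΦ

/-- Base step: at each point there is a neighbourhood (carried by the bump profile `ρ`)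
and a pair of exact relative isometries with orthogonal ranges. -/
lemma base [Nontrivial D]
    (hfib : ∀ x : X, ∃ v w : D,
      star v * v - 1 ∈ fiberIdeal Φ x ∧ star w * w - 1 ∈ fiberIdeal Φ x ∧
      star v * w ∈ fiberIdeal Φ x) (x : X) :
    ∃ (ρ : C(X,ℝ)) (v w : D), (∀ y, ρ y ∈ Set.Icc (0:ℝ) 1) ∧ 0 < ρ x ∧
      RelPair Φ {y | 0 < ρ y} v w := by
  classical
  obtain ⟨v₀, w₀, h₁, h₂, h₃⟩ := hfib x
  obtain ⟨g₁, hI₁, hx₁, hn₁⟩ := lemA Φ hΦ x h₁ (ε := 1/16) (by norm_num)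
  obtain ⟨g₂, hI₂, hx₂, hn₂⟩ := lemA Φ hΦ x h₂ (ε := 1/16) (by norm_num)
  obtain ⟨g₃, hI₃, hx₃, hn₃⟩ := lemA Φ hΦ x h₃ (ε := 1/16) (by norm_num)
  set g : C(X,ℝ) := g₁ * (g₂ * g₃) with hgdef
  have hgIcc : ∀ y, g y ∈ Set.Icc (0:ℝ) 1 := by
    intro y
    have i1 := hI₁ y; have i2 := hI₂ y; have i3 := hI₃ y
    constructor
    · exact mul_nonneg i1.1 (mul_nonneg i2.1 i3.1)
    · exact mul_le_one₀ i1.2 (mul_nonneg i2.1 i3.1)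
        (mul_le_one₀ i2.2 i3.1 i3.2)
  have hgx : g x = 1 := by
    simp only [hgdef, ContinuousMap.mul_apply, hx₁, hx₂, hx₃]; norm_num
  have crush : ∀ (h k : C(X,ℝ)), (∀ y, h y ∈ Set.Icc (0:ℝ) 1) → ∀ (a : D) (ε : ℝ),
      ‖Φ (rC k) * a‖ ≤ ε → ‖Φ (rC (h * k)) * a‖ ≤ ε := by
    intro h k hIcc a ε hka
    have : Φ (rC (h * k)) * a = Φ (rC h) * (Φ (rC k) * a) := by
      rw [rC_mul, map_mul, mul_assoc]
    rw [this]
    refine le_trans (norm_mul_le _ _) ?_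
    have hε : 0 ≤ ε := le_trans (norm_nonneg _) hka
    calc ‖Φ (rC h)‖ * ‖Φ (rC k) * a‖ ≤ 1 * ε :=
          mul_le_mul (phi_norm_le_one Φ hIcc) hka (norm_nonneg _) zero_le_one
      _ = ε := one_mul _
  have hc₁ : ‖Φ (rC g) * (star v₀ * v₀ - 1)‖ ≤ 1/16 := by
    have hre : g = (g₂ * g₃) * g₁ := by rw [hgdef]; ring
    rw [hre]
    exact crush _ _ (fun y => ⟨mul_nonneg (hI₂ y).1 (hI₃ y).1,
      mul_le_one₀ (hI₂ y).2 (hI₃ y).1 (hI₃ y).2⟩) _ _ hn₁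
  have hc₂ : ‖Φ (rC g) * (star w₀ * w₀ - 1)‖ ≤ 1/16 := by
    have hre : g = (g₁ * g₃) * g₂ := by rw [hgdef]; ring
    rw [hre]
    exact crush _ _ (fun y => ⟨mul_nonneg (hI₁ y).1 (hI₃ y).1,
      mul_le_one₀ (hI₁ y).2 (hI₃ y).1 (hI₃ y).2⟩) _ _ hn₂
  have hc₃ : ‖Φ (rC g) * (star v₀ * w₀)‖ ≤ 1/16 := by
    have hre : g = (g₁ * g₂) * g₃ := by rw [hgdef]; ring
    rw [hre]
    exact crush _ _ (fun y => ⟨mul_nonneg (hI₁ y).1 (hI₂ y).1,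
      mul_le_one₀ (hI₁ y).2 (hI₂ y).1 (hI₂ y).2⟩) _ _ hn₃
  set U2 : Set X := {y | 1/2 < g y} with hU2def
  set U34 : Set X := {y | 3/4 < g y} with hU34def
  have hU34sub : U34 ⊆ U2 := by
    intro y hy
    simp only [hU34def, Set.mem_setOf_eq] at hy
    simp only [hU2def, Set.mem_setOf_eq]
    linarith
  have ctrl : ∀ (a : D), ‖Φ (rC g) * a‖ ≤ 1/16 → ∀ ψ : C(X,ℝ),
      Bump U2 ψ → ‖Φ (rC ψ) * a‖ ≤ 1/8 := by
    intro a ha ψ hψ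
    have := dominate Φ (g := g) hψ.1
      (fun y hy => hψ.2 y (by simpa [hU2def] using not_lt.mpr hy)) a
    linarith
  obtain ⟨χ, hχ0, hχ1, hχI⟩ := exists_continuous_zero_one_of_isClosed
    (isClosed_le (map_continuous g) continuous_const :
      IsClosed {y | g y ≤ (1:ℝ)/2})
    (isClosed_le continuous_const (map_continuous g) :
      IsClosed {y | (3:ℝ)/4 ≤ g y})
    (by
      rw [Set.disjoint_left]
      intro y hy hy'
      simp only [Set.mem_setOf_eq] at hy hy'
      linarith)
  have hχBump : Bump U2 χ := by
    refine ⟨hχI, fun y hy => ?_⟩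
    have hh : g y ≤ 1/2 := not_lt.mp (by simpa [hU2def] using hy)
    simpa using hχ0 hh
  -- common correction step producing exact relative isometries
  have korr : ∀ u : D, ‖Φ (rC g) * (star u * u - 1)‖ ≤ 1/16 →
      ∃ t : D, IsSelfAdjoint t ∧ ‖t‖ ≤ 2 ∧
        ∀ ψ : C(X,ℝ), Bump U34 ψ → (star (u * t) * (u * t)) * Φ (rC ψ) = Φ (rC ψ) := by
    intro u hu
    set c : D := star u * u - 1 with hcdef
    set aχ : D := 1 + Φ (rC χ) * c with haχdef
    have hcsa : IsSelfAdjoint c := (IsSelfAdjoint.star_mul_self u).sub (IsSelfAdjoint.one D)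
    have haχsa : IsSelfAdjoint aχ := by
      refine (IsSelfAdjoint.one D).add ?_
      rw [isSelfAdjoint_iff, star_mul, hcsa.star_eq, (phi_sa Φ χ).star_eq, ← hΦ (rC χ) c]
    have hnear : ‖aχ - 1‖ ≤ 1/2 := by
      rw [haχdef, add_sub_cancel_left]
      have := ctrl c hu χ hχBump
      linarith
    obtain ⟨t, htsa, htat, htn⟩ := exists_normalizer haχsa hnear
    refine ⟨t, htsa, htn, ?_⟩
    intro ψ hψ
    have hχψ : χ * ψ = ψ := by
      ext y
      by_cases hψy : ψ y = 0
      · simp [hψy]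
      · have hyU : y ∈ U34 := by
          by_contra hyn
          exact hψy (hψ.2 y hyn)
        have hgy : (3:ℝ)/4 ≤ g y := le_of_lt (by simpa [hU34def] using hyU)
        have : χ y = 1 := by simpa using hχ1 hgy
        simp [this]
    have hkey : (star u * u) * Φ (rC ψ) = aχ * Φ (rC ψ) := by
      have e1 : Φ (rC χ) * c * Φ (rC ψ) = Φ (rC ψ) * c := by
        rw [mul_assoc, ← hΦ (rC ψ) c, ← mul_assoc, ← map_mul, ← rC_mul, hχψ]
      have e2 : (star u * u) * Φ (rC ψ) = Φ (rC ψ) + c * Φ (rC ψ) := by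
        rw [hcdef, sub_mul, one_mul]
        abel
      rw [e2, ← hΦ (rC ψ) c, ← e1, haχdef, add_mul, one_mul]
    calc (star (u * t) * (u * t)) * Φ (rC ψ)
        = (t * (star u * u) * t) * Φ (rC ψ) := by
          rw [star_mul, htsa.star_eq, mul_assoc t (star u) (u * t),
            ← mul_assoc (star u) u t, ← mul_assoc t (star u * u) t]
      _ = t * ((star u * u) * Φ (rC ψ)) * t := by
          rw [← central_shift Φ hΦ ψ (t * (star u * u)) t, mul_assoc t (star u * u)]
      _ = t * (aχ * Φ (rC ψ)) * t := by rw [hkey]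
      _ = (t * aχ * t) * Φ (rC ψ) := by
          rw [← mul_assoc t aχ (Φ (rC ψ)), central_shift Φ hΦ ψ (t * aχ) t]
      _ = Φ (rC ψ) := by rw [htat, one_mul]
  obtain ⟨tv, htvsa, htvn, htv⟩ := korr v₀ hc₁
  obtain ⟨tw, htwsa, htwn, htw⟩ := korr w₀ hc₂
  set v' : D := v₀ * tv with hv'def
  set w' : D := w₀ * tw with hw'def
  set r : D := star v' * w' with hrdef
  have hrsmall : ∀ ψ : C(X,ℝ), Bump U34 ψ → ‖r * Φ (rC ψ)‖ ≤ 1/2 := by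
    intro ψ hψ
    have e1 : r * Φ (rC ψ) = tv * (Φ (rC ψ) * (star v₀ * w₀) * tw) := by
      rw [hrdef, hv'def, hw'def, star_mul, htvsa.star_eq]
      simp only [mul_assoc]
      congr 1
      rw [comm_move Φ hΦ ψ w₀ tw, comm_move2 Φ hΦ ψ (star v₀) (w₀ * tw)]
    rw [e1]
    have h1 : ‖Φ (rC ψ) * (star v₀ * w₀)‖ ≤ 1/8 := ctrl _ hc₃ ψ (hψ.mono hU34sub)
    calc ‖tv * (Φ (rC ψ) * (star v₀ * w₀) * tw)‖
        ≤ ‖tv‖ * ‖Φ (rC ψ) * (star v₀ * w₀) * tw‖ := norm_mul_le _ _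
      _ ≤ ‖tv‖ * (‖Φ (rC ψ) * (star v₀ * w₀)‖ * ‖tw‖) := by
          gcongr
          exact norm_mul_le _ _
      _ ≤ 2 * ((1/8) * 2) := by
          have h0 : (0:ℝ) ≤ ‖Φ (rC ψ) * (star v₀ * w₀)‖ := norm_nonneg _
          gcongr
      _ = 1/2 := by norm_num
  have hv'iso : ∀ ψ : C(X,ℝ), Bump U34 ψ → (star v' * v') * Φ (rC ψ) = Φ (rC ψ) :=
    fun ψ hψ => htv ψ hψ
  have hw'iso : ∀ ψ : C(X,ℝ), Bump U34 ψ → (star w' * w') * Φ (rC ψ) = Φ (rC ψ) :=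
    fun ψ hψ => htw ψ hψ
  set w'' : D := w' - v' * r with hw''def
  have hvw'' : ∀ ψ : C(X,ℝ), Bump U34 ψ → (star v' * w'') * Φ (rC ψ) = 0 := by
    intro ψ hψ
    set τ : C(X,ℝ) := sqrtC ψ with hτdef
    have hft : rC ψ = rC τ * rC τ := sqrtC_sq (fun y => (hψ.1 y).1)
    have hτB : Bump U34 τ := hψ.sqrtC'
    have e0 : star v' * w'' = r - (star v' * v') * r := by
      rw [hw''def, mul_sub (star v') w' (v' * r), ← hrdef, ← mul_assoc (star v') v' r]
    rw [e0, sub_mul]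
    have e1 : ((star v' * v') * r) * Φ (rC ψ)
        = (1 * ((star v' * v') * Φ (rC τ))) * (r * Φ (rC τ)) := by
      have := sandwich Φ hΦ hft (1 : D) (star v' * v') r
      rw [one_mul] at this
      rw [this]
    rw [e1, hv'iso τ hτB, one_mul, bump_sq_pull Φ hΦ hft r, sub_self]
  have hw''w'' : ∀ ψ : C(X,ℝ), Bump U34 ψ →
      (star w'' * w'') * Φ (rC ψ) = Φ (rC ψ) - (star r * r) * Φ (rC ψ) := by
    intro ψ hψ
    set τ : C(X,ℝ) := sqrtC ψ with hτdef
    have hft : rC ψ = rC τ * rC τ := sqrtC_sq (fun y => (hψ.1 y).1)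
    have hτB : Bump U34 τ := hψ.sqrtC'
    have hstarr : star w' * v' = star r := by
      rw [hrdef, star_mul (star v') w', star_star]
    have e0 : star w'' * w'' = star w' * w' - star r * r - star r * r
        + star r * ((star v' * v') * r) := by
      have hsw : star w'' = star w' - star r * star v' := by
        rw [hw''def, star_sub, star_mul v' r]
      rw [hsw, hw''def, sub_mul, mul_sub (star w') w' (v' * r),
        mul_sub (star r * star v') w' (v' * r)]
      rw [← mul_assoc (star w') v' r, hstarr]
      rw [mul_assoc (star r) (star v') w', ← hrdef]
      rw [mul_assoc (star r) (star v') (v' * r), ← mul_assoc (star v') v' r]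
      abel
    have e4 : (star r * ((star v' * v') * r)) * Φ (rC ψ)
        = (star r * r) * Φ (rC ψ) := by
      rw [← mul_assoc (star r) (star v' * v') r]
      rw [sandwich Φ hΦ hft (star r) (star v' * v') r, hv'iso τ hτB]
      rw [mul_assoc (star r) (Φ (rC τ)) (r * Φ (rC τ)), bump_sq_pull Φ hΦ hft r,
        ← mul_assoc]
    rw [e0, add_mul, sub_mul, sub_mul, hw'iso ψ hψ, e4]
    abel
  -- second Urysohn function
  obtain ⟨χ', hχ'0, hχ'1, hχ'I⟩ := exists_continuous_zero_one_of_isClosed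
    (isClosed_le (map_continuous g) continuous_const :
      IsClosed {y | g y ≤ (3:ℝ)/4})
    (isClosed_le continuous_const (map_continuous g) :
      IsClosed {y | (7:ℝ)/8 ≤ g y})
    (by
      rw [Set.disjoint_left]
      intro y hy hy'
      simp only [Set.mem_setOf_eq] at hy hy'
      linarith)
  have hχ'B : Bump U34 χ' := by
    refine ⟨hχ'I, fun y hy => ?_⟩
    have hh : g y ≤ 3/4 := not_lt.mp (by simpa [hU34def] using hy)
    simpa using hχ'0 hh
  set c' : D := star w'' * w'' - 1 with hc'def
  set b : D := 1 + Φ (rC χ') * c' with hbdef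
  have hc'sa : IsSelfAdjoint c' := (IsSelfAdjoint.star_mul_self w'').sub (IsSelfAdjoint.one D)
  have hbsa : IsSelfAdjoint b := by
    refine (IsSelfAdjoint.one D).add ?_
    rw [isSelfAdjoint_iff, star_mul, hc'sa.star_eq, (phi_sa Φ χ').star_eq, ← hΦ (rC χ') c']
  have hbnear : ‖b - 1‖ ≤ 1/2 := by
    rw [hbdef, add_sub_cancel_left, hΦ (rC χ') c', hc'def, sub_mul, one_mul,
      hw''w'' χ' hχ'B]
    set τ' : C(X,ℝ) := sqrtC χ' with hτ'def
    have hft' : rC χ' = rC τ' * rC τ' := sqrtC_sq (fun y => (hχ'I y).1)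
    have hτ'B : Bump U34 τ' := hχ'B.sqrtC'
    have e1 : Φ (rC χ') - (star r * r) * Φ (rC χ') - Φ (rC χ')
        = -((star r * r) * Φ (rC χ')) := by abel
    rw [e1, norm_neg]
    have e2 : (star r * r) * Φ (rC χ') = star (r * Φ (rC τ')) * (r * Φ (rC τ')) := by
      rw [star_mul_bump Φ hΦ τ' r, mul_assoc (star r) (Φ (rC τ')) (r * Φ (rC τ')),
        bump_sq_pull Φ hΦ hft' r, ← mul_assoc (star r) r (Φ (rC χ'))]
    rw [e2, CStarRing.norm_star_mul_self]
    have := hrsmall τ' hτ'B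
    nlinarith [norm_nonneg (r * Φ (rC τ'))]
  obtain ⟨s, hssa, hsbs, _⟩ := exists_normalizer hbsa hbnear
  set w₃ : D := w'' * s with hw₃def
  -- the bump profile
  set ρ : C(X,ℝ) := ⟨fun y => max (g y - 7/8) 0,
    (((map_continuous g).sub continuous_const).max continuous_const)⟩ with hρdef
  have hρiff : ∀ y, (0 < ρ y) ↔ ((7:ℝ)/8 < g y) := by
    intro y
    simp only [hρdef, ContinuousMap.coe_mk, lt_max_iff]
    constructor
    · rintro (h | h)
      · linarith
      · exact absurd h (lt_irrefl 0)
    · intro h; left; linarith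
  have hUsub : {y | 0 < ρ y} ⊆ U34 := by
    intro y hy
    have := (hρiff y).1 hy
    simp only [hU34def, Set.mem_setOf_eq]
    linarith
  refine ⟨ρ, v', w₃, ?_, ?_, ?_⟩
  · intro y
    refine ⟨le_max_right _ _, max_le ?_ zero_le_one⟩
    linarith [(hgIcc y).2]
  · rw [hρiff x, hgx]; norm_num
  · intro ψ hψ
    have hψ34 : Bump U34 ψ := hψ.mono hUsub
    have hχ'ψ : χ' * ψ = ψ := by
      ext y
      by_cases hψy : ψ y = 0
      · simp [hψy]
      · have hyU : y ∈ {y | 0 < ρ y} := by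
          by_contra hyn
          exact hψy (hψ.2 y hyn)
        have hgy : (7:ℝ)/8 ≤ g y := le_of_lt ((hρiff y).1 hyU)
        have : χ' y = 1 := by simpa using hχ'1 hgy
        simp [this]
    refine ⟨hv'iso ψ hψ34, ?_, ?_⟩
    · -- w₃ is a relative isometry
      have hkey : (star w'' * w'') * Φ (rC ψ) = b * Φ (rC ψ) := by
        have e1 : Φ (rC χ') * c' * Φ (rC ψ) = Φ (rC ψ) * c' := by
          rw [mul_assoc, ← hΦ (rC ψ) c', ← mul_assoc, ← map_mul, ← rC_mul, hχ'ψ]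
        have e2 : (star w'' * w'') * Φ (rC ψ) = Φ (rC ψ) + c' * Φ (rC ψ) := by
          rw [hc'def, sub_mul, one_mul]; abel
        rw [e2, ← hΦ (rC ψ) c', ← e1, hbdef, add_mul, one_mul]
      calc (star w₃ * w₃) * Φ (rC ψ)
          = (s * (star w'' * w'') * s) * Φ (rC ψ) := by
            rw [hw₃def, star_mul w'' s, hssa.star_eq, mul_assoc s (star w'') (w'' * s),
              ← mul_assoc (star w'') w'' s, ← mul_assoc s (star w'' * w'') s]
        _ = s * ((star w'' * w'') * Φ (rC ψ)) * s := by
            rw [← central_shift Φ hΦ ψ (s * (star w'' * w'')) s,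
              mul_assoc s (star w'' * w'')]
        _ = s * (b * Φ (rC ψ)) * s := by rw [hkey]
        _ = (s * b * s) * Φ (rC ψ) := by
            rw [← mul_assoc s b (Φ (rC ψ)), central_shift Φ hΦ ψ (s * b) s]
        _ = Φ (rC ψ) := by rw [hsbs, one_mul]
    · -- orthogonality
      set τ : C(X,ℝ) := sqrtC ψ with hτdef
      have hft : rC ψ = rC τ * rC τ := sqrtC_sq (fun y => (hψ.1 y).1)
      have hτB : Bump U34 τ := hψ34.sqrtC'
      have e0 : star v' * w₃ = 1 * (star v' * w'') * s := by
        rw [hw₃def, one_mul, ← mul_assoc]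
      rw [e0, sandwich Φ hΦ hft (1:D) (star v' * w'') s, hvw'' τ hτB]
      simp

end base

section pow

variable (hΦ : ∀ f : C(X, ℂ), ∀ d : D, Φ f * d = d * Φ f)
include hΦ

lemma pow_rels {U : Set X} {v w : D} (h : RelPair Φ U v w) :
    ∀ p q : ℕ, ∀ ψ : C(X,ℝ), Bump U ψ →
      (star (w^p * v) * (w^q * v)) * Φ (rC ψ) =
        if p = q then Φ (rC ψ) else 0 := by
  have hwp : ∀ p : ℕ, ∀ ψ : C(X,ℝ), Bump U ψ →
      (star (w^p) * w^p) * Φ (rC ψ) = Φ (rC ψ) := by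
    intro p
    induction p with
    | zero => intro ψ hψ; simp
    | succ p ih =>
      intro ψ hψ
      set τ : C(X,ℝ) := sqrtC ψ with hτdef
      have hft : rC ψ = rC τ * rC τ := sqrtC_sq (fun y => (hψ.1 y).1)
      have hτB : Bump U τ := hψ.sqrtC'
      have e0 : star (w^(p+1)) * w^(p+1) = star w * (star (w^p) * w^p) * w := by
        rw [pow_succ, star_mul, mul_assoc (star w) (star (w^p)) (w^p * w),
          ← mul_assoc (star (w^p)) (w^p) w, ← mul_assoc]
      rw [e0, sandwich Φ hΦ hft (star w) (star (w^p) * w^p) w, ih τ hτB,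
        mul_assoc (star w) (Φ (rC τ)) (w * Φ (rC τ)), bump_sq_pull Φ hΦ hft w,
        ← mul_assoc]
      exact (h ψ hψ).2.1
  have hcross : ∀ k : ℕ, ∀ ψ : C(X,ℝ), Bump U ψ →
      (star v * (w^(k+1) * v)) * Φ (rC ψ) = 0 := by
    intro k ψ hψ
    set τ : C(X,ℝ) := sqrtC ψ with hτdef
    have hft : rC ψ = rC τ * rC τ := sqrtC_sq (fun y => (hψ.1 y).1)
    have hτB : Bump U τ := hψ.sqrtC'
    have e0 : star v * (w^(k+1) * v) = 1 * (star v * w) * (w^k * v) := by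
      rw [pow_succ', one_mul]
      simp only [mul_assoc]
    rw [e0, sandwich Φ hΦ hft (1:D) (star v * w) (w^k * v), (h τ hτB).2.2]
    simp
  have hlt : ∀ p q : ℕ, p < q → ∀ ψ : C(X,ℝ), Bump U ψ →
      (star (w^p * v) * (w^q * v)) * Φ (rC ψ) = 0 := by
    intro p q hpq ψ hψ
    obtain ⟨k, rfl⟩ : ∃ k, q = p + (k+1) := ⟨q - p - 1, by omega⟩
    set τ : C(X,ℝ) := sqrtC ψ with hτdef
    have hft : rC ψ = rC τ * rC τ := sqrtC_sq (fun y => (hψ.1 y).1)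
    have hτB : Bump U τ := hψ.sqrtC'
    have e0 : star (w^p * v) * (w^(p+(k+1)) * v)
        = star v * (star (w^p) * w^p) * (w^(k+1) * v) := by
      rw [pow_add, star_mul]
      simp only [mul_assoc]
    rw [e0, sandwich Φ hΦ hft (star v) (star (w^p) * w^p) (w^(k+1) * v), hwp p τ hτB,
      mul_assoc (star v) (Φ (rC τ)) ((w^(k+1) * v) * Φ (rC τ)),
      bump_sq_pull Φ hΦ hft (w^(k+1) * v), ← mul_assoc]
    exact hcross k ψ hψ
  intro p q ψ hψ
  rcases Nat.lt_trichotomy p q with hpq | hpq | hpq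
  · rw [if_neg (Nat.ne_of_lt hpq)]
    exact hlt p q hpq ψ hψ
  · subst hpq
    rw [if_pos rfl]
    set τ : C(X,ℝ) := sqrtC ψ with hτdef
    have hft : rC ψ = rC τ * rC τ := sqrtC_sq (fun y => (hψ.1 y).1)
    have hτB : Bump U τ := hψ.sqrtC'
    have e0 : star (w^p * v) * (w^p * v) = star v * (star (w^p) * w^p) * v := by
      rw [star_mul]
      simp only [mul_assoc]
    rw [e0, sandwich Φ hΦ hft (star v) (star (w^p) * w^p) v, hwp p τ hτB,
      mul_assoc (star v) (Φ (rC τ)) (v * Φ (rC τ)), bump_sq_pull Φ hΦ hft v,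
      ← mul_assoc]
    exact (h ψ hψ).1
  · rw [if_neg (Nat.ne_of_gt hpq)]
    set C : D := star (w^q * v) * (w^p * v) with hCdef
    have hC : C * Φ (rC ψ) = 0 := hlt q p hpq ψ hψ
    have e0 : star (w^p * v) * (w^q * v) = star C := by
      rw [hCdef, star_mul (star (w^q * v)) (w^p * v), star_star]
    rw [e0]
    have e1 : star C * Φ (rC ψ) = star (C * Φ (rC ψ)) := by
      rw [star_mul C (Φ (rC ψ)), (phi_sa Φ ψ).star_eq, hΦ]
    rw [e1, hC, star_zero]

end pow

end Stmt0Aux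

end Stmt0Aux

open Stmt0Aux in
/-- Let `X` be a compact Hausdorff space and `D` a separable unital `C(X)`-algebra all of
whose fibres `D_x = D / I_x` have properly infinite unit (i.e. for every `x` there are
`v, w ∈ D` with `v*v - 1 ∈ I_x`, `w*w - 1 ∈ I_x` and `v*w ∈ I_x`).  Then the unit of
`M_l(D)` is properly infinite for some positive integer `l`: there are matrices
`V, W ∈ M_l(D)` with `V*V = 1`, `W*W = 1` and `V*W = 0`. -/
theorem stmt0 {X : Type*} [TopologicalSpace X] [CompactSpace X] [T2Space X]
    {D : Type*} [CStarAlgebra D] [TopologicalSpace.SeparableSpace D]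
    (Φ : C(X, ℂ) →⋆ₐ[ℂ] D) (hΦ : ∀ f : C(X, ℂ), ∀ d : D, Φ f * d = d * Φ f)
    (hfib : ∀ x : X, ∃ v w : D,
      star v * v - 1 ∈ fiberIdeal Φ x ∧ star w * w - 1 ∈ fiberIdeal Φ x ∧
      star v * w ∈ fiberIdeal Φ x) :
    ∃ l : ℕ, 0 < l ∧ ∃ V W : Matrix (Fin l) (Fin l) D,
      star V * V = 1 ∧ star W * W = 1 ∧ star V * W = 0 := by
  classical
  rcases subsingleton_or_nontrivial D with hD | hD
  · exact ⟨1, one_pos, 0, 0, Subsingleton.elim _ _, Subsingleton.elim _ _,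
      Subsingleton.elim _ _⟩
  rcases isEmpty_or_nonempty X with hX | hX
  · exfalso
    have h10 : (1:D) = 0 := by
      rw [← map_one Φ, ← map_zero Φ]
      congr 1
      ext y
      exact isEmptyElim y
    exact one_ne_zero h10
  -- choose base data at every point
  choose ρ v w hρIcc hρpos hrel using base Φ hΦ hfib
  set U : X → Set X := fun x => {y | 0 < ρ x y} with hUdef
  have hUopen : ∀ x, IsOpen (U x) := fun x =>
    isOpen_lt continuous_const (map_continuous (ρ x))
  have hUcov : Set.univ ⊆ ⋃ x : X, U x := by
    intro y _
    exact Set.mem_iUnion.2 ⟨y, hρpos y⟩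
  obtain ⟨t, ht⟩ := isCompact_univ.elim_finite_subcover U hUopen hUcov
  have htne : t.Nonempty := by
    obtain ⟨y⟩ := hX
    obtain ⟨i, hi⟩ := Set.mem_iUnion₂.1 (ht (Set.mem_univ y))
    exact ⟨i, hi.1⟩
  set n : ℕ := t.card with hndef
  have hnpos : 0 < n := Finset.card_pos.mpr htne
  set e : Fin n ≃ {i // i ∈ t} := t.equivFin.symm with hedef
  -- partition of unity
  set σs : C(X,ℝ) := ∑ i ∈ t, ρ i with hσdef
  have hσpos : ∀ y, 0 < σs y := by
    intro y
    obtain ⟨i, hit, hyU⟩ := Set.mem_iUnion₂.1 (ht (Set.mem_univ y))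
    have hval : σs y = ∑ j ∈ t, ρ j y := by
      rw [hσdef]
      simp
    rw [hval]
    refine Finset.sum_pos' (fun j _ => (hρIcc j y).1) ⟨i, hit, ?_⟩
    exact hyU
  set φ : X → C(X,ℝ) := fun j => ⟨fun y => ρ j y / σs y,
    (map_continuous (ρ j)).div (map_continuous σs) (fun y => (hσpos y).ne')⟩ with hφdef
  have hφIcc : ∀ j ∈ t, ∀ y, φ j y ∈ Set.Icc (0:ℝ) 1 := by
    intro j hj y
    have happ : φ j y = ρ j y / σs y := rfl
    have hval : σs y = ∑ k ∈ t, ρ k y := by rw [hσdef]; simp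
    constructor
    · rw [happ]
      exact div_nonneg (hρIcc j y).1 (hσpos y).le
    · rw [happ, div_le_one (hσpos y), hval]
      exact Finset.single_le_sum (fun k _ => (hρIcc k y).1) hj
  have hφBump : ∀ j ∈ t, Bump (U j) (φ j) := by
    intro j hj
    refine ⟨hφIcc j hj, fun y hy => ?_⟩
    have h0 : ρ j y = 0 :=
      le_antisymm (not_lt.mp (by simpa [hUdef] using hy)) (hρIcc j y).1
    show ρ j y / σs y = 0
    rw [h0, zero_div]
  have hφsum : ∑ j ∈ t, φ j = 1 := by
    ext y
    rw [ContinuousMap.one_apply]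
    have happ : (∑ j ∈ t, φ j) y = ∑ j ∈ t, ρ j y / σs y := by
      simp [hφdef]
    rw [happ, ← Finset.sum_div]
    have hval : σs y = ∑ k ∈ t, ρ k y := by rw [hσdef]; simp
    rw [← hval, div_self (hσpos y).ne']
  set τf : X → C(X,ℝ) := fun j => sqrtC (φ j) with hτfdef
  -- the key Gram computation
  have key : ∀ (f h : Fin n → ℕ) (p q : Fin n),
      (star (Matrix.of fun (i : Fin n) (p : Fin n) =>
          (w (e i) ^ (f p) * v (e i)) * Φ (rC (τf (e i)))) *
        (Matrix.of fun (i : Fin n) (p : Fin n) =>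
          (w (e i) ^ (h p) * v (e i)) * Φ (rC (τf (e i))))) p q =
      if f p = h q then (1 : D) else 0 := by
    intro f h p q
    rw [Matrix.mul_apply]
    have hterm : ∀ i : Fin n,
        (star (Matrix.of fun (i : Fin n) (p : Fin n) =>
            (w (e i) ^ (f p) * v (e i)) * Φ (rC (τf (e i))))) p i *
          (Matrix.of fun (i : Fin n) (p : Fin n) =>
            (w (e i) ^ (h p) * v (e i)) * Φ (rC (τf (e i)))) i q =
        if f p = h q then Φ (rC (φ (e i))) else 0 := by
      intro i
      rw [Matrix.star_eq_conjTranspose, Matrix.conjTranspose_apply, Matrix.of_apply,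
        Matrix.of_apply]
      have hit : (e i : X) ∈ t := (e i).2
      have hBφ : Bump (U (e i : X)) (φ (e i : X)) := hφBump _ hit
      have hft : rC (φ (e i : X)) = rC (τf (e i : X)) * rC (τf (e i : X)) :=
        sqrtC_sq (fun y => (hBφ.1 y).1)
      have e1 : star ((w (e i : X) ^ (f p) * v (e i : X)) * Φ (rC (τf (e i : X)))) *
          ((w (e i : X) ^ (h q) * v (e i : X)) * Φ (rC (τf (e i : X)))) =
          (star (w (e i : X) ^ (f p) * v (e i : X)) *
            (w (e i : X) ^ (h q) * v (e i : X))) * Φ (rC (φ (e i : X))) := by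
        rw [star_mul_bump Φ hΦ (τf (e i : X)) (w (e i : X) ^ (f p) * v (e i : X))]
        rw [mul_assoc (star (w (e i : X) ^ (f p) * v (e i : X))) (Φ (rC (τf (e i : X))))
          ((w (e i : X) ^ (h q) * v (e i : X)) * Φ (rC (τf (e i : X))))]
        rw [bump_sq_pull Φ hΦ hft (w (e i : X) ^ (h q) * v (e i : X))]
        rw [← mul_assoc (star (w (e i : X) ^ (f p) * v (e i : X)))
          (w (e i : X) ^ (h q) * v (e i : X)) (Φ (rC (φ (e i : X))))]
      rw [e1]
      exact pow_rels Φ hΦ (hrel (e i)) (f p) (h q) (φ (e i : X)) hBφ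
    rw [Finset.sum_congr rfl (fun i _ => hterm i)]
    by_cases hpq : f p = h q
    · rw [if_pos hpq]
      simp only [if_pos hpq]
      have hsum1 : (∑ i : Fin n, Φ (rC (φ (e i : X)))) = Φ (rC (∑ j ∈ t, φ j)) := by
        rw [rC_sum, map_sum, ← Finset.sum_coe_sort t (fun j => Φ (rC (φ j)))]
        exact Equiv.sum_comp e (fun j => Φ (rC (φ (j : X))))
      rw [hsum1, hφsum, rC_one, map_one]
    · rw [if_neg hpq]
      simp only [if_neg hpq]
      exact Finset.sum_const_zero
  refine ⟨n, hnpos,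
    Matrix.of (fun (i : Fin n) (p : Fin n) =>
      (w (e i) ^ (p : ℕ) * v (e i)) * Φ (rC (τf (e i)))),
    Matrix.of (fun (i : Fin n) (p : Fin n) =>
      (w (e i) ^ ((p : ℕ) + n) * v (e i)) * Φ (rC (τf (e i)))), ?_, ?_, ?_⟩
  · ext p q
    rw [key (fun p => (p : ℕ)) (fun p => (p : ℕ)) p q, Matrix.one_apply]
    by_cases hpq : p = q
    · rw [if_pos (by rw [hpq]), if_pos hpq]
    · rw [if_neg (fun hh => hpq (Fin.val_inj.mp hh)), if_neg hpq]
  · ext p q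
    rw [key (fun p => (p : ℕ) + n) (fun p => (p : ℕ) + n) p q, Matrix.one_apply]
    by_cases hpq : p = q
    · rw [if_pos (by rw [hpq]), if_pos hpq]
    · rw [if_neg (fun hh => hpq (Fin.val_inj.mp (Nat.add_right_cancel hh))), if_neg hpq]
  · ext p q
    rw [key (fun p => (p : ℕ)) (fun p => (p : ℕ) + n) p q, Matrix.zero_apply]
    rw [if_neg (by omega)]
end

section
/- Let B be a unital C*-algebra. Let v_1, v_2 ∈ B be isometries (v_k*v_k = 1 for k = 1, 2) with v_1*v_2 = 0, and set p = v_1v_1* + v_2v_2*; let w_1, w_2 ∈ B be isometries with w_1*w_2 = 0, and set q = w_1w_1* + w_2w_2*. Suppose V ∈ B is a unitary with V*pV = q. Then the element u := 1 − q + w_1 V* v_1* V + w_2 V* v_2* V is a unitary in B, and w_k = u V* v_k V for k = 1, 2. -/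
lemma key1 {B : Type*} [Ring B] [StarRing B] (t₁ t₂ w₁ w₂ : B)
    (ht₁ : star t₁ * t₁ = 1) (ht₂ : star t₂ * t₂ = 1) (ht : star t₁ * t₂ = 0)
    (hw₁ : star w₁ * w₁ = 1) (hw₂ : star w₂ * w₂ = 1) (hw : star w₁ * w₂ = 0)
    (hq : t₁ * star t₁ + t₂ * star t₂ = w₁ * star w₁ + w₂ * star w₂) :
    star (1 - (w₁ * star w₁ + w₂ * star w₂) + w₁ * star t₁ + w₂ * star t₂) *
      (1 - (w₁ * star w₁ + w₂ * star w₂) + w₁ * star t₁ + w₂ * star t₂) = 1 := by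
  have hw' : star w₂ * w₁ = 0 := by
    have := congrArg star hw; simpa [star_mul] using this
  have ht' : star t₂ * t₁ = 0 := by
    have := congrArg star ht; simpa [star_mul] using this
  have Hw11 : ∀ a : B, star w₁ * (w₁ * a) = a := fun a => by rw [← mul_assoc, hw₁, one_mul]
  have Hw22 : ∀ a : B, star w₂ * (w₂ * a) = a := fun a => by rw [← mul_assoc, hw₂, one_mul]
  have Hw12 : ∀ a : B, star w₁ * (w₂ * a) = 0 := fun a => by rw [← mul_assoc, hw, zero_mul]
  have Hw21 : ∀ a : B, star w₂ * (w₁ * a) = 0 := fun a => by rw [← mul_assoc, hw', zero_mul]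
  have Ht11 : ∀ a : B, star t₁ * (t₁ * a) = a := fun a => by rw [← mul_assoc, ht₁, one_mul]
  have Ht22 : ∀ a : B, star t₂ * (t₂ * a) = a := fun a => by rw [← mul_assoc, ht₂, one_mul]
  have Ht12 : ∀ a : B, star t₁ * (t₂ * a) = 0 := fun a => by rw [← mul_assoc, ht, zero_mul]
  have Ht21 : ∀ a : B, star t₂ * (t₁ * a) = 0 := fun a => by rw [← mul_assoc, ht', zero_mul]
  have hq2 : t₁ * star t₁ = w₁ * star w₁ + w₂ * star w₂ - t₂ * star t₂ := by
    rw [← hq]; abel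
  simp only [star_add, star_sub, star_mul, star_one, star_star]
  simp only [mul_add, add_mul, sub_mul, mul_sub, mul_one, one_mul, mul_assoc,
    Hw11, Hw22, Hw12, Hw21, Ht11, Ht22, Ht12, Ht21, hw₁, hw₂, hw, hw',
    ht₁, ht₂, ht, ht', mul_zero, zero_mul, add_zero, zero_add, sub_zero]
  rw [hq2]; abel

lemma key {B : Type*} [Ring B] [StarRing B] (t₁ t₂ w₁ w₂ : B)
    (ht₁ : star t₁ * t₁ = 1) (ht₂ : star t₂ * t₂ = 1) (ht : star t₁ * t₂ = 0)
    (hw₁ : star w₁ * w₁ = 1) (hw₂ : star w₂ * w₂ = 1) (hw : star w₁ * w₂ = 0)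
    (hq : t₁ * star t₁ + t₂ * star t₂ = w₁ * star w₁ + w₂ * star w₂) :
    star (1 - (w₁ * star w₁ + w₂ * star w₂) + w₁ * star t₁ + w₂ * star t₂) *
      (1 - (w₁ * star w₁ + w₂ * star w₂) + w₁ * star t₁ + w₂ * star t₂) = 1 ∧
    (1 - (w₁ * star w₁ + w₂ * star w₂) + w₁ * star t₁ + w₂ * star t₂) *
      star (1 - (w₁ * star w₁ + w₂ * star w₂) + w₁ * star t₁ + w₂ * star t₂) = 1 ∧
    w₁ = (1 - (w₁ * star w₁ + w₂ * star w₂) + w₁ * star t₁ + w₂ * star t₂) * t₁ ∧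
    w₂ = (1 - (w₁ * star w₁ + w₂ * star w₂) + w₁ * star t₁ + w₂ * star t₂) * t₂ := by
  have hw' : star w₂ * w₁ = 0 := by
    have := congrArg star hw; simpa [star_mul] using this
  have ht' : star t₂ * t₁ = 0 := by
    have := congrArg star ht; simpa [star_mul] using this
  have Hw11 : ∀ a : B, star w₁ * (w₁ * a) = a := fun a => by rw [← mul_assoc, hw₁, one_mul]
  have Hw22 : ∀ a : B, star w₂ * (w₂ * a) = a := fun a => by rw [← mul_assoc, hw₂, one_mul]
  have Hw12 : ∀ a : B, star w₁ * (w₂ * a) = 0 := fun a => by rw [← mul_assoc, hw, zero_mul]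
  have Hw21 : ∀ a : B, star w₂ * (w₁ * a) = 0 := fun a => by rw [← mul_assoc, hw', zero_mul]
  have Q1 : w₁ * (star w₁ * t₁) + w₂ * (star w₂ * t₁) = t₁ := by
    have h : (w₁ * star w₁ + w₂ * star w₂) * t₁ = t₁ := by
      rw [← hq, add_mul, mul_assoc, mul_assoc, ht₁, ht', mul_one, mul_zero, add_zero]
    simpa [add_mul, mul_assoc] using h
  have Q2 : w₁ * (star w₁ * t₂) + w₂ * (star w₂ * t₂) = t₂ := by
    have h : (w₁ * star w₁ + w₂ * star w₂) * t₂ = t₂ := by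
      rw [← hq, add_mul, mul_assoc, mul_assoc, ht, ht₂, mul_zero, mul_one, zero_add]
    simpa [add_mul, mul_assoc] using h
  refine ⟨key1 t₁ t₂ w₁ w₂ ht₁ ht₂ ht hw₁ hw₂ hw hq, ?_, ?_, ?_⟩
  · have h := key1 w₁ w₂ t₁ t₂ hw₁ hw₂ hw ht₁ ht₂ ht hq.symm
    set U' : B := 1 - (t₁ * star t₁ + t₂ * star t₂) + t₁ * star w₁ + t₂ * star w₂ with hU'
    have hu : (1 - (w₁ * star w₁ + w₂ * star w₂) + w₁ * star t₁ + w₂ * star t₂) = star U' := by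
      rw [hU']
      simp only [star_add, star_sub, star_mul, star_one, star_star, hq]
    rw [hu, star_star]
    exact h
  · simp only [mul_add, add_mul, sub_mul, mul_sub, mul_one, one_mul, mul_assoc,
      Hw11, Hw22, Hw12, Hw21, hw₁, hw₂, hw, hw',
      mul_zero, zero_mul, add_zero, zero_add, sub_zero]
    rw [Q1, ht₁, ht', mul_one, mul_zero, add_zero]; abel
  · simp only [mul_add, add_mul, sub_mul, mul_sub, mul_one, one_mul, mul_assoc,
      Hw11, Hw22, Hw12, Hw21, hw₁, hw₂, hw, hw',
      mul_zero, zero_mul, add_zero, zero_add, sub_zero]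
    rw [Q2, ht, ht₂, mul_zero, mul_one]; abel



/-- Let `B` be a unital C*-algebra, `v₁, v₂` isometries with orthogonal ranges,
`p = v₁v₁* + v₂v₂*`, and `w₁, w₂` isometries with orthogonal ranges,
`q = w₁w₁* + w₂w₂*`.  If `V` is a unitary with `V* p V = q`, then
`u = 1 - q + w₁ V* v₁* V + w₂ V* v₂* V` is a unitary and `wₖ = u V* vₖ V` for
`k = 1, 2`. -/
theorem stmt4 {B : Type*} [CStarAlgebra B]
    (v₁ v₂ : B) (hv₁ : star v₁ * v₁ = 1) (hv₂ : star v₂ * v₂ = 1)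
    (hv : star v₁ * v₂ = 0)
    (w₁ w₂ : B) (hw₁ : star w₁ * w₁ = 1) (hw₂ : star w₂ * w₂ = 1)
    (hw : star w₁ * w₂ = 0)
    (V : B) (hV₁ : star V * V = 1) (hV₂ : V * star V = 1)
    (hVpq : star V * (v₁ * star v₁ + v₂ * star v₂) * V = w₁ * star w₁ + w₂ * star w₂) :
    star (1 - (w₁ * star w₁ + w₂ * star w₂)
          + w₁ * (star V * star v₁ * V) + w₂ * (star V * star v₂ * V)) *
        (1 - (w₁ * star w₁ + w₂ * star w₂)
          + w₁ * (star V * star v₁ * V) + w₂ * (star V * star v₂ * V)) = 1 ∧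
    (1 - (w₁ * star w₁ + w₂ * star w₂)
          + w₁ * (star V * star v₁ * V) + w₂ * (star V * star v₂ * V)) *
        star (1 - (w₁ * star w₁ + w₂ * star w₂)
          + w₁ * (star V * star v₁ * V) + w₂ * (star V * star v₂ * V)) = 1 ∧
    w₁ = (1 - (w₁ * star w₁ + w₂ * star w₂)
          + w₁ * (star V * star v₁ * V) + w₂ * (star V * star v₂ * V))
        * (star V * v₁ * V) ∧
    w₂ = (1 - (w₁ * star w₁ + w₂ * star w₂)
          + w₁ * (star V * star v₁ * V) + w₂ * (star V * star v₂ * V))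
        * (star V * v₂ * V) := by

  have hVV : ∀ a : B, V * (star V * a) = a := fun a => by rw [← mul_assoc, hV₂, one_mul]
  have hVV' : ∀ a : B, star V * (V * a) = a := fun a => by rw [← mul_assoc, hV₁, one_mul]
  have hs₁ : star (star V * v₁ * V) = star V * star v₁ * V := by
    simp [star_mul, mul_assoc]
  have hs₂ : star (star V * v₂ * V) = star V * star v₂ * V := by
    simp [star_mul, mul_assoc]
  have ht₁ : star (star V * v₁ * V) * (star V * v₁ * V) = 1 := by
    rw [hs₁]
    simp only [mul_assoc, hVV, hVV']
    rw [← mul_assoc (star v₁), hv₁, one_mul, hV₁]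
  have ht₂ : star (star V * v₂ * V) * (star V * v₂ * V) = 1 := by
    rw [hs₂]
    simp only [mul_assoc, hVV, hVV']
    rw [← mul_assoc (star v₂), hv₂, one_mul, hV₁]
  have ht : star (star V * v₁ * V) * (star V * v₂ * V) = 0 := by
    rw [hs₁]
    simp only [mul_assoc, hVV, hVV']
    rw [← mul_assoc (star v₁), hv, zero_mul, mul_zero]
  have hq : (star V * v₁ * V) * star (star V * v₁ * V)
      + (star V * v₂ * V) * star (star V * v₂ * V) = w₁ * star w₁ + w₂ * star w₂ := by
    rw [hs₁, hs₂, ← hVpq]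
    simp only [mul_add, add_mul, mul_assoc, hVV, hVV']
  have := key (star V * v₁ * V) (star V * v₂ * V) w₁ w₂ ht₁ ht₂ ht hw₁ hw₂ hw hq
  rw [hs₁, hs₂] at this
  exact this
end

section
/- Let A and B be unital C*-algebras and π : A → B a surjective unital *-homomorphism. If u ∈ B is a unitary lying in the path component of the identity of the unitary group of B, then there exists a unitary ũ ∈ A with π(ũ) = u. -/
/-! The path component of `1` in the unitary group of `B` consists of finite products of
exponentials `exp (i y)` with `y` self-adjoint (`Unitary.mem_pathComponentOne_iff`). Each factor
lifts: `y` is the image of the real part `x` of any preimage, and `π (exp (i x)) = exp (i π x)`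
by continuity of `π`. The unitaries that lift form a submonoid, so they contain every such
product. -/

open selfAdjoint
open scoped CStarAlgebra ComplexStarModule

lemma exists_selfAdjoint_map_eq_of_surjective {A B F : Type*}
    [AddCommGroup A] [Module ℂ A] [StarAddMonoid A] [StarModule ℂ A]
    [AddCommGroup B] [Module ℂ B] [StarAddMonoid B] [StarModule ℂ B]
    [FunLike F A B] [StarHomClass F A B] [LinearMapClass F ℂ A B]
    {f : F} (hf : Function.Surjective f) (y : selfAdjoint B) :
    ∃ x : selfAdjoint A, f x = y := by
  obtain ⟨a, ha⟩ := hf y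
  exact ⟨ℜ a, by rw [map_realPart, ha, y.2.coe_realPart]⟩

namespace StarAlgHom

variable {A B : Type*} [CStarAlgebra A] [CStarAlgebra B] (π : A →⋆ₐ[ℂ] B)

lemma map_expUnitary {x : selfAdjoint A} {y : selfAdjoint B} (hxy : π x = y) :
    π (expUnitary x) = expUnitary y := by
  let +nondep : NormedAlgebra ℚ A := .restrictScalars ℚ ℂ A
  let +nondep : NormedAlgebra ℚ B := .restrictScalars ℚ ℂ B
  simp [NormedSpace.map_exp π (map_continuous π), hxy]

variable {π}

lemma expUnitary_mem_mrange_unitaryMap (hπ : Function.Surjective π) (y : selfAdjoint B) :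
    expUnitary y ∈ MonoidHom.mrange (Unitary.map (.ofClass π)) := by
  obtain ⟨x, hxy⟩ := exists_selfAdjoint_map_eq_of_surjective hπ y
  exact ⟨expUnitary x, Subtype.ext (π.map_expUnitary hxy)⟩

lemma pathComponent_one_subset_mrange_unitaryMap (hπ : Function.Surjective π) :
    pathComponent (1 : unitary B) ⊆ MonoidHom.mrange (Unitary.map (.ofClass π)) := by
  intro u hu
  obtain ⟨l, rfl⟩ := Unitary.mem_pathComponentOne_iff.mp hu
  refine Submonoid.list_prod_mem (MonoidHom.mrange _) fun v hv ↦ ?_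
  obtain ⟨y, -, rfl⟩ := List.mem_map.mp hv
  exact expUnitary_mem_mrange_unitaryMap hπ y

end StarAlgHom

theorem stmt6_general {A B : Type*} [CStarAlgebra A] [CStarAlgebra B]
    (π : A →⋆ₐ[ℂ] B) (hπ : Function.Surjective π)
    (u : B)
    (hpath : ∃ γ : Path (1 : B) u, ∀ t, star (γ t) * γ t = 1 ∧ γ t * star (γ t) = 1) :
    ∃ v : A, star v * v = 1 ∧ v * star v = 1 ∧ π v = u := by
  have hjoined : JoinedIn (unitary B : Set B) 1 u := hpath
  obtain ⟨v, hv⟩ := StarAlgHom.pathComponent_one_subset_mrange_unitaryMap hπ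
    hjoined.joined_subtype
  exact ⟨v, v.2.1, v.2.2, congrArg Subtype.val hv⟩

/-- Let `π : A → B` be a surjective unital `*`-homomorphism of unital C*-algebras.
Every unitary `u ∈ B` in the path component of `1` in the unitary group of `B`
(i.e. joined to `1` by a continuous path of unitaries) lifts to a unitary of `A`. -/
theorem stmt6 {A B : Type*} [CStarAlgebra A] [CStarAlgebra B]
    (π : A →⋆ₐ[ℂ] B) (hπ : Function.Surjective π)
    (u : B) (hu : star u * u = 1) (hu' : u * star u = 1)
    (hpath : ∃ γ : Path (1 : B) u, ∀ t, star (γ t) * γ t = 1 ∧ γ t * star (γ t) = 1) :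
    ∃ v : A, star v * v = 1 ∧ v * star v = 1 ∧ π v = u :=
  stmt6_general π hπ u hpath
end

section
/- Let C be a unital C*-algebra and q ∈ C a full projection. Then there exist a positive integer n and an element V ∈ M_n(C) such that V*V = diag(1, 0, ..., 0) and VV* ≤ diag(q, q, ..., q); that is, the unit of C is Murray–von Neumann dominated by the direct sum of n copies of q in M_n(C). -/
/-- An element `p` of a topological ring is *full* if the closed two-sided ideal it
generates is the whole ring. -/
def IsFullElement {C : Type*} [NonUnitalNonAssocRing C] [TopologicalSpace C] (p : C) : Prop :=
  closure ((TwoSidedIdeal.span {p} : TwoSidedIdeal C) : Set C) = Set.univ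

open Pointwise Set in
private lemma stmt7_span_rep {C : Type*} [Ring C] (q z : C)
    (hz : z ∈ TwoSidedIdeal.span {q}) :
    ∃ (k : ℕ) (x y : Fin k → C), z = ∑ i, x i * q * y i := by
  rw [TwoSidedIdeal.mem_span_iff_mem_addSubgroup_closure] at hz
  induction hz using AddSubgroup.closure_induction with
  | mem m hm =>
    obtain ⟨-, ⟨a, -, c, rfl : c = q, rfl⟩, b, -, rfl⟩ := hm
    exact ⟨1, fun _ => a, fun _ => b, by simp⟩
  | zero => exact ⟨0, ![], ![], by simp⟩
  | add w₁ w₂ h₁ h₂ ih₁ ih₂ =>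
    obtain ⟨k₁, x₁, y₁, rfl⟩ := ih₁
    obtain ⟨k₂, x₂, y₂, rfl⟩ := ih₂
    exact ⟨k₁ + k₂, Fin.append x₁ x₂, Fin.append y₁ y₂, by
      rw [Fin.sum_univ_add]
      simp [Fin.append]⟩
  | neg w h ih =>
    obtain ⟨k, x, y, rfl⟩ := ih
    exact ⟨k, fun i => -(x i), y, by simp [Finset.sum_neg_distrib]⟩

private lemma stmt7_one_eq_sum {C : Type*} [CStarAlgebra C] (q : C)
    (hq_full : IsFullElement q) :
    ∃ (k : ℕ) (a b : Fin k → C), (1 : C) = ∑ i, a i * q * b i := by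
  have h1 : (1 : C) ∈ closure ((TwoSidedIdeal.span {q} : TwoSidedIdeal C) : Set C) := by
    rw [hq_full]; trivial
  rw [Metric.mem_closure_iff] at h1
  obtain ⟨z, hz, hd⟩ := h1 1 one_pos
  have hz1 : ‖1 - z‖ < 1 := by
    rw [← dist_eq_norm]; exact hd
  have hu : IsUnit z := by
    have h := (Units.oneSub (1 - z) hz1).isUnit
    simpa using h
  obtain ⟨k, x, y, hzz⟩ := stmt7_span_rep q z hz
  obtain ⟨u, rfl⟩ := hu
  refine ⟨k, fun i => ↑u⁻¹ * x i, y, ?_⟩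
  calc (1 : C) = ↑u⁻¹ * ↑u := by simp
    _ = ∑ i, ↑u⁻¹ * x i * q * y i := by
        rw [hzz, Finset.mul_sum]; simp [mul_assoc]

open Finset in
private lemma stmt7_sumCS {C : Type*} [CStarAlgebra C] [PartialOrder C] [StarOrderedRing C]
    (k : ℕ) (x : Fin k → C) :
    star (∑ i, x i) * (∑ i, x i) ≤ k • ∑ i, star (x i) * x i := by
  set S := ∑ i, x i with hS
  set T := ∑ i, star (x i) * x i with hT
  have key : ∑ i : Fin k, ∑ j : Fin k, star (x i - x j) * (x i - x j)
      = 2 • (k • T - star S * S) := by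
    have expand : ∀ i j : Fin k, star (x i - x j) * (x i - x j)
        = star (x i) * x i - star (x i) * x j - star (x j) * x i + star (x j) * x j := by
      intro i j
      simp [star_sub, sub_mul, mul_sub]
      abel
    simp only [expand, Finset.sum_add_distrib, Finset.sum_sub_distrib]
    rw [two_nsmul]
    have h1 : ∑ _i : Fin k, ∑ _j : Fin k, star (x _i) * x _i = k • T := by
      simp only [Finset.sum_const, Finset.card_univ, Fintype.card_fin, hT, Finset.smul_sum]
    have h1' : ∑ _i : Fin k, ∑ _j : Fin k, star (x _j) * x _j = k • T := by
      rw [Finset.sum_comm]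
      simp only [Finset.sum_const, Finset.card_univ, Fintype.card_fin, hT, Finset.smul_sum]
    have h2 : ∑ i : Fin k, ∑ j : Fin k, star (x i) * x j = star S * S := by
      rw [hS, star_sum, Finset.sum_mul]
      exact Finset.sum_congr rfl fun i _ => by rw [Finset.mul_sum]
    have h3 : ∑ i : Fin k, ∑ j : Fin k, star (x j) * x i = star S * S := by
      rw [Finset.sum_comm]; exact h2
    rw [h1, h1', h2, h3]; abel
  have pos : (0:C) ≤ ∑ i : Fin k, ∑ j : Fin k, star (x i - x j) * (x i - x j) :=
    Finset.sum_nonneg fun i _ => Finset.sum_nonneg fun j _ => star_mul_self_nonneg _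
  rw [key] at pos
  have h : (0:C) ≤ k • T - star S * S := by
    have h := smul_nonneg (by norm_num : (0:ℝ) ≤ 1/2) pos
    rwa [two_nsmul, smul_add, ← add_smul, show (1/2 + 1/2 : ℝ) = 1 by norm_num, one_smul] at h
  exact sub_nonneg.mp h

private lemma stmt7_exists_v {C : Type*} [CStarAlgebra C] [PartialOrder C] [StarOrderedRing C]
    (q : C) (hq_idem : q * q = q)
    (k : ℕ) (a b : Fin k → C) (hsum : (1 : C) = ∑ i, a i * q * b i) :
    ∃ (m : ℕ) (v : Fin m → C), (∀ i, q * v i = v i) ∧ ∑ i, star (v i) * v i = 1 := by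
  classical
  set x : Fin k → C := fun i => a i * q * b i with hx
  set r : Fin k → ℝ := fun i => (k : ℝ) * ‖star (a i) * a i‖ with hr
  have hr_nonneg : ∀ i, 0 ≤ r i := fun i => by positivity
  set w : Fin k → C := fun i => Real.sqrt (r i) • (q * b i) with hw
  have hqw : ∀ i, q * w i = w i := by
    intro i
    simp only [hw, mul_smul_comm, ← mul_assoc, hq_idem]
  have hww : ∀ i, star (w i) * w i = r i • (star (q * b i) * (q * b i)) := by
    intro i
    rw [hw]
    simp only [star_smul, star_trivial, smul_mul_assoc, mul_smul_comm, smul_smul]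
    rw [Real.mul_self_sqrt (hr_nonneg i)]
  set t : C := ∑ i, star (w i) * w i with ht
  have ht_nonneg : (0:C) ≤ t := Finset.sum_nonneg fun i _ => star_mul_self_nonneg _
  have h1t : (1 : C) ≤ t := by
    have h1 : (1 : C) = star (∑ i, x i) * (∑ i, x i) := by rw [← hsum]; simp
    have h2 : star (∑ i, x i) * (∑ i, x i) ≤ k • ∑ i, star (x i) * x i := stmt7_sumCS k x
    have h3 : ∀ i, star (x i) * x i ≤ ‖star (a i) * a i‖ • (star (q * b i) * (q * b i)) := by
      intro i
      have hxi : star (x i) * x i = star (q * b i) * (star (a i) * a i) * (q * b i) := by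
        simp only [hx, star_mul, mul_assoc]
      rw [hxi]
      exact CStarAlgebra.star_left_conjugate_le_norm_smul (hb := IsSelfAdjoint.star_mul_self _)
    have h4 : (k • ∑ i, star (x i) * x i)
        ≤ k • ∑ i, ‖star (a i) * a i‖ • (star (q * b i) * (q * b i)) :=
      nsmul_le_nsmul_right (Finset.sum_le_sum fun i _ => h3 i) k
    have h5 : (k • ∑ i, ‖star (a i) * a i‖ • (star (q * b i) * (q * b i))) = t := by
      rw [ht]
      rw [← Nat.cast_smul_eq_nsmul ℝ, Finset.smul_sum]
      exact Finset.sum_congr rfl fun i _ => by rw [hww i, smul_smul]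
    calc (1:C) = star (∑ i, x i) * (∑ i, x i) := h1
      _ ≤ k • ∑ i, star (x i) * x i := h2
      _ ≤ k • ∑ i, ‖star (a i) * a i‖ • (star (q * b i) * (q * b i)) := h4
      _ = t := h5
  have ht_unit : IsUnit t := CStarAlgebra.isUnit_of_le 1 h1t (h := isStrictlyPositive_one)
  set u : C := t ^ (-(1/2 : ℝ)) with hu
  have hu_sa : IsSelfAdjoint u := IsSelfAdjoint.of_nonneg CFC.rpow_nonneg
  have hutu : u * t * u = 1 := CFC.conjugate_rpow_neg_one_half t (ht_unit.isStrictlyPositive ht_nonneg)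
  refine ⟨k, fun i => w i * u, fun i => by rw [← mul_assoc, hqw], ?_⟩
  calc ∑ i, star (w i * u) * (w i * u)
      = ∑ i, u * (star (w i) * w i) * u := by
        refine Finset.sum_congr rfl fun i _ => ?_
        rw [star_mul, hu_sa.star_eq]
        noncomm_ring
    _ = u * t * u := by
        rw [ht, Finset.mul_sum, Finset.sum_mul]
    _ = 1 := hutu

private lemma stmt7_mvn_alg {A : Type*} [Ring A] [StarRing A] (Q V E : A)
    (hQsa : star Q = Q) (hQ2 : Q * Q = Q) (hQV : Q * V = V)
    (hE : star V * V = E) (hVE : V * E = V) :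
    Q - V * star V = star ((1 - V * star V) * Q) * ((1 - V * star V) * Q) := by
  set P := V * star V with hP
  have hPsa : star P = P := by simp [hP, star_mul]
  have hP2 : P * P = P := by
    calc P * P = V * (star V * V) * star V := by rw [hP]; noncomm_ring
      _ = V * E * star V := by rw [hE]
      _ = P := by rw [hVE, hP]
  have hQP : Q * P = P := by rw [hP, ← mul_assoc, hQV]
  have hPQ : P * Q = P := by
    have h := congrArg star hQP
    rwa [star_mul, hPsa, hQsa] at h
  have h11 : (1 - P) * (1 - P) = 1 - P := by
    calc (1 - P) * (1 - P) = 1 - P - P + P * P := by noncomm_ring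
      _ = 1 - P := by rw [hP2]; noncomm_ring
  symm
  calc star ((1 - P) * Q) * ((1 - P) * Q)
      = Q * ((1 - P) * (1 - P)) * Q := by
        rw [star_mul, star_sub, star_one, hPsa, hQsa]; noncomm_ring
    _ = Q * (1 - P) * Q := by rw [h11]
    _ = Q * Q - Q * P * Q := by noncomm_ring
    _ = Q - P := by rw [hQ2, hQP, hPQ]

/-- Let `q` be a full projection in a unital C*-algebra `C`.  Then there are a positive
integer `n` (written `n + 1`) and `V ∈ Mₙ(C)` with `V*V = diag(1, 0, …, 0)` and
`VV* ≤ diag(q, …, q)`: the unit of `C` is Murray–von Neumann dominated by the direct sum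
of `n` copies of `q`.  (Here `x ≤ y` in the C*-algebra `Mₙ(C)` is expressed by
`y - x = c* c` for some `c`, i.e. `y - x` lies in the positive cone.) -/
theorem stmt7 {C : Type*} [CStarAlgebra C]
    (q : C) (hq_sa : star q = q) (hq_idem : q * q = q) (hq_full : IsFullElement q) :
    ∃ n : ℕ, ∃ V : Matrix (Fin (n + 1)) (Fin (n + 1)) C,
      star V * V = Matrix.single 0 0 1 ∧
      ∃ c : Matrix (Fin (n + 1)) (Fin (n + 1)) C,
        Matrix.diagonal (fun _ => q) - V * star V = star c * c := by
  classical
  letI : PartialOrder C := CStarAlgebra.spectralOrder C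
  haveI : StarOrderedRing C := CStarAlgebra.spectralOrderedRing C
  obtain ⟨k, a, b, hsum⟩ := stmt7_one_eq_sum q hq_full
  obtain ⟨m, v, hqv, hvv⟩ := stmt7_exists_v q hq_idem k a b hsum
  -- pad `v` to length `m + 1`
  set v' : Fin (m + 1) → C := fun i => if h : (i : ℕ) < m then v ⟨i, h⟩ else 0 with hv'
  have hqv' : ∀ i, q * v' i = v' i := by
    intro i
    rw [hv']
    by_cases h : (i : ℕ) < m <;> simp [h, hqv]
  have hvv' : ∑ i, star (v' i) * v' i = (1 : C) := by
    rw [Fin.sum_univ_castSucc]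
    have hlast : v' (Fin.last m) = 0 := by simp [hv']
    have hcast : ∀ i : Fin m, v' i.castSucc = v i := by
      intro i
      simp [hv', Fin.castSucc, i.isLt]
    simp only [hlast, hcast, star_zero, zero_mul, mul_zero, add_zero]
    exact hvv
  set V : Matrix (Fin (m + 1)) (Fin (m + 1)) C :=
    Matrix.of (fun i j => if j = 0 then v' i else 0) with hV
  have hVapp : ∀ i j, V i j = if j = 0 then v' i else 0 := fun i j => rfl
  have hE : star V * V = Matrix.single 0 0 1 := by
    ext i j
    rw [Matrix.mul_apply]
    simp only [Matrix.star_apply, hVapp, Matrix.single, Matrix.of_apply]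
    by_cases hi : i = 0 <;> by_cases hj : j = 0 <;>
      simp [hi, hj, hvv', eq_comm]
  refine ⟨m, V, hE, (1 - V * star V) * Matrix.diagonal (fun _ => q), ?_⟩
  refine stmt7_mvn_alg (Matrix.diagonal (fun _ => q)) V (Matrix.single 0 0 1)
    ?_ ?_ ?_ hE ?_
  · rw [Matrix.star_eq_conjTranspose, Matrix.diagonal_conjTranspose]
    simp [hq_sa]
  · rw [Matrix.diagonal_mul_diagonal]
    simp [hq_idem]
  · ext i j
    rw [Matrix.diagonal_mul]
    by_cases hj : j = 0 <;> simp [hVapp, hj, hqv' i]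
  · ext i j
    rw [Matrix.mul_apply]
    rw [Finset.sum_eq_single 0]
    · simp only [hVapp, Matrix.single, Matrix.of_apply]
      by_cases hj : j = 0 <;> simp [hj, eq_comm]
    · intro l _ hl
      simp [Matrix.single, Ne.symm hl]
    · intro h
      exact absurd (Finset.mem_univ 0) h
end

section
/- Let C be a unital C*-algebra containing a projection q that is both full and properly infinite. Then the unit of C is properly infinite; that is, there exist isometries s, t ∈ C (s*s = 1 = t*t) with s*t = 0. -/
namespace TwoSidedIdeal

lemma one_mem_of_one_mem_closure {R : Type*} [NormedRing R] [HasSummableGeomSeries R]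
    {I : TwoSidedIdeal R} (h : (1 : R) ∈ closure (I : Set R)) : (1 : R) ∈ I := by
  obtain ⟨a, ha, hdist⟩ := Metric.mem_closure_iff.mp h 1 one_pos
  rw [dist_eq_norm] at hdist
  let u := Units.oneSub (1 - a) hdist
  have hu : (u : R) = a := sub_sub_cancel 1 a
  simpa [← hu] using I.mul_mem_left (↑u⁻¹ : R) u (hu ▸ ha)

lemma exists_fin_sum_eq_of_mem_span_singleton {R : Type*} [Ring R] {q z : R}
    (hz : z ∈ span {q}) : ∃ (n : ℕ) (x y : Fin n → R), ∑ i, x i * q * y i = z := by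
  rw [mem_span_iff_mem_addSubgroup_closure] at hz
  induction hz using AddSubgroup.closure_induction with
  | mem z hz =>
    obtain ⟨-, ⟨x, -, q', rfl, rfl⟩, y, -, rfl⟩ := hz
    exact ⟨1, ![x], ![y], by simp⟩
  | zero => exact ⟨0, ![], ![], by simp⟩
  | add z z' _ _ ih ih' =>
    obtain ⟨n, x, y, rfl⟩ := ih
    obtain ⟨n', x', y', rfl⟩ := ih'
    exact ⟨n + n', Fin.append x x', Fin.append y y', by simp [Fin.sum_univ_add]⟩
  | neg z _ ih =>
    obtain ⟨n, x, y, rfl⟩ := ih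
    exact ⟨n, -x, y, by simp⟩

end TwoSidedIdeal

section StarRing

variable {R : Type*} [Ring R] {q v w : R}

lemma mul_pow_mul_of_mul_eq (hqw : q * w = w) {c : R} (hc : q * c = c) (k : ℕ) :
    q * (w ^ k * c) = w ^ k * c := by
  cases k with
  | zero => simpa using hc
  | succ k => rw [pow_succ', mul_assoc, ← mul_assoc q w, hqw]

variable [StarRing R]

lemma star_pow_mul_pow_mul_of_mul_eq (hw : star w * w = q) (hqw : q * w = w) {c : R}
    (hc : q * c = c) (k : ℕ) : star w ^ k * (w ^ k * c) = c := by
  induction k with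
  | zero => simp
  | succ k ih =>
    rw [pow_succ, pow_succ', mul_assoc, mul_assoc w, ← mul_assoc (star w) w, hw,
      mul_pow_mul_of_mul_eq hqw hc, ih]

lemma star_pow_mul_mul_pow_mul (hv : star v * v = q) (hw : star w * w = q) (hqv : q * v = v)
    (hqw : q * w = w) (hvw : star v * w = 0) (i j : ℕ) :
    star (w ^ i * v) * (w ^ j * v) = if i = j then q else 0 := by
  wlog hij : i ≤ j generalizing i j
  · rw [← star_star (w ^ j * v), ← star_mul, this j i (by omega), if_neg (by omega),
      if_neg (by omega), star_zero]
  obtain ⟨k, rfl⟩ := Nat.exists_eq_add_of_le hij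
  rw [star_mul, star_pow, pow_add, mul_assoc (w ^ i), mul_assoc (star v),
    star_pow_mul_pow_mul_of_mul_eq hw hqw (mul_pow_mul_of_mul_eq hqw hqv k)]
  cases k with
  | zero => simp [hv]
  | succ k => rw [pow_succ', mul_assoc, ← mul_assoc (star v), hvw, zero_mul, if_neg (by omega)]

lemma sum_mul_star_mul_sum {ι κ : Type*} [Fintype κ] [DecidableEq ι] {e : ι → R}
    (he : ∀ i j, star (e i) * e j = if i = j then q else 0) (f g : κ → ι) (x y : κ → R) :
    (∑ i, x i * star (e (f i))) * ∑ j, e (g j) * y j =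
      ∑ i, ∑ j, if f i = g j then x i * q * y j else 0 := by
  rw [Finset.sum_mul_sum]
  refine Finset.sum_congr rfl fun i _ => Finset.sum_congr rfl fun j _ => ?_
  rw [mul_assoc, ← mul_assoc (star _), he]
  split_ifs <;> simp [mul_assoc]

lemma exists_mul_eq_one_and_star_mul_eq_zero_of_sum_eq_one {e : ℕ → R}
    (he : ∀ i j, star (e i) * e j = if i = j then q else 0) {n : ℕ} {x y : Fin n → R}
    (hxy : ∑ i, x i * q * y i = 1) :
    ∃ b r r' : R, b * r = 1 ∧ star r * r' = 0 ∧ star r' * r' = star r * r := by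
  have hstar (f : Fin n → ℕ) :
      star (∑ j, e (f j) * y j) = ∑ j, star (y j) * star (e (f j)) := by
    simp [star_sum]
  refine ⟨∑ i, x i * star (e (2 * i)), ∑ j : Fin n, e (2 * j) * y j,
    ∑ j : Fin n, e (2 * j + 1) * y j, ?_, ?_, ?_⟩
  · rw [sum_mul_star_mul_sum he, ← hxy]
    simp [Fin.val_inj]
  · rw [hstar, sum_mul_star_mul_sum he]
    exact Finset.sum_eq_zero fun i _ => Finset.sum_eq_zero fun j _ => if_neg (by omega)
  · rw [hstar, hstar, sum_mul_star_mul_sum he, sum_mul_star_mul_sum he]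
    simp [Fin.val_inj]

end StarRing

section CStarAlgebra

variable {A : Type*} [CStarAlgebra A] [PartialOrder A] [StarOrderedRing A]

lemma isStrictlyPositive_star_mul_self_of_mul_eq_one {b r : A} (hbr : b * r = 1) :
    IsStrictlyPositive (star r * r) := by
  have hle : (1 : A) ≤ ‖star b * b‖ • (star r * r) := by
    calc (1 : A) = star (b * r) * (b * r) := by rw [hbr, star_one, one_mul]
      _ = star r * (star b * b) * r := by rw [star_mul]; noncomm_ring
      _ ≤ ‖star b * b‖ • (star r * r) := CStarAlgebra.star_left_conjugate_le_norm_smul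
  have hunit : IsUnit (algebraMap ℝ A ‖star b * b‖ * (star r * r)) := by
    rw [← Algebra.smul_def]
    exact CStarAlgebra.isUnit_of_le 1 hle
  exact ⟨star_mul_self_nonneg r, (Commute.isUnit_mul_iff (Algebra.commutes _ _)).mp hunit |>.2⟩

lemma exists_isometries_of_mul_eq_one {b r r' : A} (hbr : b * r = 1) (hrr' : star r * r' = 0)
    (hr' : star r' * r' = star r * r) :
    ∃ s t : A, star s * s = 1 ∧ star t * t = 1 ∧ star s * t = 0 := by
  have hpos := isStrictlyPositive_star_mul_self_of_mul_eq_one hbr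
  set g := (star r * r) ^ (-(1 / 2) : ℝ)
  have hg : star g = g := (IsSelfAdjoint.of_nonneg CFC.rpow_nonneg).star_eq
  have hconj (x y : A) : star (x * g) * (y * g) = g * (star x * y) * g := by
    rw [star_mul, hg]; noncomm_ring
  refine ⟨r * g, r' * g, ?_, ?_, ?_⟩
  · rw [hconj]; exact CFC.conjugate_rpow_neg_one_half _
  · rw [hconj, hr']; exact CFC.conjugate_rpow_neg_one_half _
  · rw [hconj, hrr', mul_zero, zero_mul]

end CStarAlgebra

theorem stmt9_general {C : Type*} [CStarAlgebra C]
    (q : C) (hq_full : IsFullElement q)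
    (v w : C) (hv : star v * v = q) (hw : star w * w = q)
    (hqv : q * v = v) (hqw : q * w = w) (hvw : star v * w = 0) :
    ∃ s t : C, star s * s = 1 ∧ star t * t = 1 ∧ star s * t = 0 := by
  let := CStarAlgebra.spectralOrder C
  let := CStarAlgebra.spectralOrderedRing C
  have hone : (1 : C) ∈ TwoSidedIdeal.span {q} :=
    TwoSidedIdeal.one_mem_of_one_mem_closure (hq_full ▸ Set.mem_univ 1)
  obtain ⟨n, x, y, hxy⟩ := TwoSidedIdeal.exists_fin_sum_eq_of_mem_span_singleton hone
  have he := star_pow_mul_mul_pow_mul hv hw hqv hqw hvw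
  obtain ⟨b, r, r', hbr, hrr', hr'⟩ :=
    exists_mul_eq_one_and_star_mul_eq_zero_of_sum_eq_one he hxy
  exact exists_isometries_of_mul_eq_one hbr hrr' hr'

/-- Let `C` be a unital C*-algebra containing a projection `q` that is both full and
properly infinite (there are `v, w` with `v*v = q = w*w`, `qv = v`, `qw = w`,
`v*w = 0`).  Then the unit of `C` is properly infinite: there are isometries
`s, t ∈ C` with `s*t = 0`. -/
theorem stmt9 {C : Type*} [CStarAlgebra C]
    (q : C) (hq_sa : star q = q) (hq_idem : q * q = q) (hq_full : IsFullElement q)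
    (v w : C) (hv : star v * v = q) (hw : star w * w = q)
    (hqv : q * v = v) (hqw : q * w = w) (hvw : star v * w = 0) :
    ∃ s t : C, star s * s = 1 ∧ star t * t = 1 ∧ star s * t = 0 :=
  stmt9_general q hq_full v w hv hw hqv hqw hvw
end

section
/- Let X be a compact Hausdorff space, A a unital C(X)-algebra, and a ∈ A. Then the fibre norm function x ↦ ‖a_x‖ = dist(a, I_x) is upper semicontinuous on X. -/
open Metric Filter Topology

lemma AddSubmonoid.infDist_add_le {E : Type*} [SeminormedAddCommGroup E]
    (S : AddSubmonoid E) (u v : E) :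
    infDist (u + v) S ≤ infDist u S + infDist v S := by
  have hS : (S : Set E).Nonempty := ⟨0, S.zero_mem⟩
  refine le_of_forall_pos_le_add fun ε hε => ?_
  obtain ⟨s, hs, hus⟩ := (infDist_lt_iff hS).1 (lt_add_of_pos_right (infDist u S) (half_pos hε))
  obtain ⟨t, ht, hvt⟩ := (infDist_lt_iff hS).1 (lt_add_of_pos_right (infDist v S) (half_pos hε))
  calc infDist (u + v) S ≤ dist (u + v) (s + t) := infDist_le_dist_of_mem (S.add_mem hs ht)
    _ ≤ dist u s + dist v t := dist_add_add_le _ _ _ _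
    _ ≤ infDist u S + infDist v S + ε := by linarith

section FiberIdeal

variable {X : Type*} [TopologicalSpace X] {A : Type*} [CStarAlgebra A] (Φ : C(X, ℂ) →⋆ₐ[ℂ] A)

def fiberGenerators (x : X) : Set A :=
  {c : A | ∃ (f : C(X, ℂ)) (a : A), f x = 0 ∧ c = Φ f * a}

lemma infDist_fiberIdeal (c : A) (x : X) :
    infDist c (fiberIdeal Φ x) = infDist c (AddSubmonoid.closure (fiberGenerators Φ x)) :=
  infDist_closure

lemma infDist_fiberIdeal_add_le (u v : A) (x : X) :
    infDist (u + v) (fiberIdeal Φ x) ≤ infDist u (fiberIdeal Φ x) + infDist v (fiberIdeal Φ x) := by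
  simpa only [infDist_fiberIdeal] using AddSubmonoid.infDist_add_le _ u v

lemma infDist_mul_fiberIdeal_le (f : C(X, ℂ)) (b : A) (x : X) :
    infDist (Φ f * b) (fiberIdeal Φ x) ≤ ‖f x‖ * ‖b‖ := by
  set g : C(X, ℂ) := f - algebraMap ℂ C(X, ℂ) (f x)
  have hg : Φ g * b ∈ fiberIdeal Φ x :=
    subset_closure (AddSubmonoid.subset_closure ⟨g, b, by simp [g], rfl⟩)
  have hsub : Φ f * b - Φ g * b = f x • b := by
    rw [← sub_mul, map_sub, AlgHomClass.commutes, sub_sub_cancel,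
      Algebra.algebraMap_eq_smul_one, smul_one_mul]
  calc infDist (Φ f * b) (fiberIdeal Φ x) ≤ dist (Φ f * b) (Φ g * b) := infDist_le_dist_of_mem hg
    _ = ‖f x‖ * ‖b‖ := by rw [dist_eq_norm, hsub, norm_smul]

lemma tendsto_infDist_fiberIdeal_nhds_zero {x₀ : X} {c : A}
    (hc : c ∈ AddSubmonoid.closure (fiberGenerators Φ x₀)) :
    Tendsto (fun x => infDist c (fiberIdeal Φ x)) (𝓝 x₀) (𝓝 0) := by
  induction hc using AddSubmonoid.closure_induction with
  | mem c hc =>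
    obtain ⟨f, b, hf, rfl⟩ := hc
    have hbound : Tendsto (fun x => ‖f x‖ * ‖b‖) (𝓝 x₀) (𝓝 0) :=
      (by fun_prop : Continuous fun x => ‖f x‖ * ‖b‖).tendsto' x₀ 0 (by simp [hf])
    exact squeeze_zero (fun _ => infDist_nonneg) (infDist_mul_fiberIdeal_le Φ f b) hbound
  | zero =>
    have h0 (x : X) : infDist (0 : A) (fiberIdeal Φ x) = 0 :=
      infDist_zero_of_mem (subset_closure (AddSubmonoid.zero_mem _))
    simp only [h0, tendsto_const_nhds]
  | add u v _ _ hu hv =>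
    exact squeeze_zero (fun _ => infDist_nonneg) (infDist_fiberIdeal_add_le Φ u v)
      (by simpa only [add_zero] using hu.add hv)

end FiberIdeal

theorem stmt10_general {X : Type*} [TopologicalSpace X]
    {A : Type*} [CStarAlgebra A]
    (Φ : C(X, ℂ) →⋆ₐ[ℂ] A)
    (a : A) :
    UpperSemicontinuous (fun x : X => Metric.infDist a (fiberIdeal Φ x)) := by
  intro x₀ y (hy : infDist a (fiberIdeal Φ x₀) < y)
  rw [infDist_fiberIdeal, infDist_lt_iff ⟨0, AddSubmonoid.zero_mem _⟩] at hy
  obtain ⟨c, hc, hac⟩ := hy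
  filter_upwards [(tendsto_infDist_fiberIdeal_nhds_zero Φ hc).eventually
    (gt_mem_nhds (sub_pos.2 hac))] with x hx
  calc infDist a (fiberIdeal Φ x) ≤ infDist c (fiberIdeal Φ x) + dist a c :=
        infDist_le_infDist_add_dist
    _ < y := by linarith

/-- Let `X` be a compact Hausdorff space, `A` a unital `C(X)`-algebra and `a ∈ A`.
Then the fibre norm function `x ↦ ‖a_x‖ = dist(a, I_x)` is upper semicontinuous. -/
theorem stmt10 {X : Type*} [TopologicalSpace X] [CompactSpace X] [T2Space X]
    {A : Type*} [CStarAlgebra A]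
    (Φ : C(X, ℂ) →⋆ₐ[ℂ] A) (hΦ : ∀ f : C(X, ℂ), ∀ a : A, Φ f * a = a * Φ f)
    (a : A) :
    UpperSemicontinuous (fun x : X => Metric.infDist a (fiberIdeal Φ x)) :=
  stmt10_general Φ a
end

section
/- Let X be a compact Hausdorff space and let A and B be unital C(X)-algebras with structure maps Φ_A, Φ_B and fibre ideals I_x^A ⊆ A, I_x^B ⊆ B. Let π : A → B be a *-homomorphism that is C(X)-linear, i.e. π(Φ_A(f)a) = Φ_B(f)π(a) for all f ∈ C(X) and a ∈ A, and suppose that for every x ∈ X and every a ∈ A one has a ∈ I_x^A if and only if π(a) ∈ I_x^B (so the induced representation of each fibre A_x on B_x is well defined and faithful). If B is a continuous C(X)-algebra, i.e. the function x ↦ dist(b, I_x^B) is continuous for every b ∈ B, then A is a continuous C(X)-algebra: the function x ↦ dist(a, I_x^A) is continuous for every a ∈ A. -/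
section Resolvent

variable {A : Type*} [CStarAlgebra A] {k : A} {t : ℝ}

lemma continuousOn_inv_one_add_mul (ht : 0 < t) (hk : ∀ s ∈ spectrum ℝ k, 0 ≤ s) :
    ContinuousOn (fun s : ℝ ↦ (1 + t * s)⁻¹) (spectrum ℝ k) :=
  (continuousOn_const.add (continuousOn_const.mul continuousOn_id)).inv₀
    fun s hs ↦ (by have := hk s hs; positivity : 0 < 1 + t * s).ne'

lemma one_sub_cfc_inv_one_add_mul (ht : 0 < t) (hk : ∀ s ∈ spectrum ℝ k, 0 ≤ s)
    (hk' : IsSelfAdjoint k) :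
    1 - cfc (fun s : ℝ ↦ (1 + t * s)⁻¹) k = k * (t • cfc (fun s : ℝ ↦ (1 + t * s)⁻¹) k) := by
  have hc := continuousOn_inv_one_add_mul ht hk
  have hmul : k * (t • cfc (fun s : ℝ ↦ (1 + t * s)⁻¹) k)
      = cfc (fun s : ℝ ↦ s * (t • (1 + t * s)⁻¹)) k := by
    rw [cfc_mul (fun s ↦ s) (fun s ↦ t • (1 + t * s)⁻¹) k continuousOn_id (hc.const_smul t),
      cfc_id' ℝ k, cfc_smul t _ k hc]
  rw [hmul, ← cfc_const_one ℝ k, ← cfc_sub (fun _ ↦ 1) _ k continuousOn_const hc]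
  refine cfc_congr fun s hs ↦ ?_
  have : 1 + t * s ≠ 0 := by have := hk s hs; positivity
  simp only [smul_eq_mul]
  field_simp
  ring

lemma norm_cfc_inv_one_add_mul_le_one (ht : 0 < t) (hk : ∀ s ∈ spectrum ℝ k, 0 ≤ s) :
    ‖cfc (fun s : ℝ ↦ (1 + t * s)⁻¹) k‖ ≤ 1 := by
  refine norm_cfc_le zero_le_one fun s hs ↦ ?_
  have := hk s hs
  rw [Real.norm_of_nonneg (by positivity)]
  exact inv_le_one_of_one_le₀ (by nlinarith)

lemma norm_mul_cfc_inv_one_add_mul_sq_le (j : A) (ht : 0 < t) :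
    ‖j * cfc (fun s : ℝ ↦ (1 + t * s)⁻¹) (star j * j)‖ ^ 2 ≤ 1 / t := by
  set w := cfc (fun s : ℝ ↦ (1 + t * s)⁻¹) (star j * j)
  have hw : IsSelfAdjoint w := cfc_predicate _ _
  have hc := continuousOn_inv_one_add_mul ht (spectrum_star_mul_self_nonneg (b := j))
  have hcfc : w * (star j * j * w)
      = cfc (fun s : ℝ ↦ (1 + t * s)⁻¹ * (s * (1 + t * s)⁻¹)) (star j * j) := by
    rw [cfc_mul (fun s ↦ (1 + t * s)⁻¹) (fun s ↦ s * (1 + t * s)⁻¹) _ hc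
        (continuousOn_id.mul hc),
      cfc_mul (fun s ↦ s) (fun s ↦ (1 + t * s)⁻¹) _ continuousOn_id hc, cfc_id' ℝ (star j * j)]
  calc ‖j * w‖ ^ 2 = ‖w * (star j * j * w)‖ := by
        rw [sq, ← CStarRing.norm_star_mul_self, star_mul, hw.star_eq]
        noncomm_ring
    _ ≤ 1 / t := by
      rw [hcfc]
      refine norm_cfc_le (by positivity) fun s hs ↦ ?_
      have h0 := spectrum_star_mul_self_nonneg s hs
      rw [Real.norm_of_nonneg (by positivity)]
      field_simp
      nlinarith [mul_nonneg (mul_nonneg ht.le ht.le) (mul_nonneg h0 h0)]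

end Resolvent

open Metric Filter Topology

noncomputable section

namespace Ideal

section NormedRing

variable {R : Type*} [NormedRing R] (I : Ideal R) [I.IsTwoSided]

namespace Quotient

lemma norm_mk_eq_infDist (a : R) : ‖mk I a‖ = infDist a I :=
  QuotientAddGroup.norm_mk (S := I.toAddSubgroup) a

instance instNormedRing [IsClosed (I : Set R)] : NormedRing (R ⧸ I) :=
  { Ideal.Quotient.ring I, Submodule.Quotient.normedAddCommGroup I with
    norm_mul_le x y := by
      have key : ∀ δ > 0, ‖x * y‖ ≤ (‖x‖ + δ) * (‖y‖ + δ) := fun δ hδ ↦ by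
        obtain ⟨a, rfl, ha⟩ := Submodule.Quotient.norm_mk_lt x hδ
        obtain ⟨b, rfl, hb⟩ := Submodule.Quotient.norm_mk_lt y hδ
        calc ‖(Submodule.Quotient.mk (a * b) : R ⧸ I)‖ ≤ ‖a * b‖ :=
              Submodule.Quotient.norm_mk_le _ _
          _ ≤ ‖a‖ * ‖b‖ := norm_mul_le a b
          _ ≤ _ := mul_le_mul ha.le hb.le (norm_nonneg _) (by positivity)
      have hlim : Tendsto (fun δ : ℝ ↦ (‖x‖ + δ) * (‖y‖ + δ)) (𝓝[>] 0) (𝓝 (‖x‖ * ‖y‖)) := by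
        refine tendsto_nhdsWithin_of_tendsto_nhds ?_
        exact (by fun_prop : Continuous fun δ : ℝ ↦ (‖x‖ + δ) * (‖y‖ + δ)).tendsto' 0 _
          (by simp)
      exact ge_of_tendsto hlim (eventually_nhdsWithin_of_forall key) }

instance instNormedAlgebra {𝕜 : Type*} [NormedField 𝕜] [NormedAlgebra 𝕜 R]
    [IsClosed (I : Set R)] : NormedAlgebra 𝕜 (R ⧸ I) :=
  { Submodule.Quotient.normedSpace I 𝕜, Ideal.Quotient.algebra 𝕜 with }

end Quotient

end NormedRing

variable {A : Type*} [CStarAlgebra A] (I : Ideal A) [I.IsTwoSided]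

lemma exists_one_sub_mem_norm_mul_lt {j : A} (hj : j ∈ I) {δ : ℝ} (hδ : 0 < δ) :
    ∃ w : A, 1 - w ∈ I ∧ IsSelfAdjoint w ∧ ‖w‖ ≤ 1 ∧ ‖j * w‖ < δ := by
  have ht : 0 < 2 / δ ^ 2 := by positivity
  refine ⟨cfc (fun s : ℝ ↦ (1 + 2 / δ ^ 2 * s)⁻¹) (star j * j), ?_, cfc_predicate _ _,
    norm_cfc_inv_one_add_mul_le_one ht spectrum_star_mul_self_nonneg, ?_⟩
  · rw [one_sub_cfc_inv_one_add_mul ht spectrum_star_mul_self_nonneg (.star_mul_self j)]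
    exact I.mul_mem_right _ (I.mul_mem_left _ hj)
  · refine lt_of_pow_lt_pow_left₀ 2 hδ.le
      ((norm_mul_cfc_inv_one_add_mul_sq_le j ht).trans_lt ?_)
    rw [one_div_div]
    linarith [pow_pos hδ 2]

variable [IsClosed (I : Set A)]

lemma star_mem_of_isClosed {j : A} (hj : j ∈ I) : star j ∈ I := by
  refine (‹IsClosed (I : Set A)›).closure_subset (Metric.mem_closure_iff.2 fun ε hε ↦ ?_)
  obtain ⟨w, hwI, hw, -, hjw⟩ := I.exists_one_sub_mem_norm_mul_lt hj hε
  refine ⟨(1 - w) * star j, I.mul_mem_right _ hwI, ?_⟩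
  rwa [dist_eq_norm, sub_mul, one_mul, sub_sub_cancel, ← hw.star_eq, ← star_mul, norm_star]

namespace Quotient

instance instStar : Star (A ⧸ I) where
  star := Quotient.map' star fun a b h ↦ by
    rw [Submodule.quotientRel_def] at h ⊢
    simpa only [star_sub] using I.star_mem_of_isClosed h

instance instStarRing : StarRing (A ⧸ I) where
  star_involutive := by rintro ⟨a⟩; exact congr_arg _ (star_star a)
  star_mul := by rintro ⟨a⟩ ⟨b⟩; exact congr_arg _ (star_mul a b)
  star_add := by rintro ⟨a⟩ ⟨b⟩; exact congr_arg _ (star_add a b)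

instance instStarModule : StarModule ℂ (A ⧸ I) where
  star_smul := by rintro c ⟨a⟩; exact congr_arg _ (star_smul c a)

instance instCStarRing : CStarRing (A ⧸ I) where
  norm_mul_self_le x := by
    refine le_of_forall_pos_le_add fun ε hε ↦ ?_
    obtain ⟨a, rfl⟩ := mk_surjective x
    obtain ⟨z, hz, hz_lt⟩ := Submodule.Quotient.norm_mk_lt
      (star (mk I a) * mk I a) (half_pos hε)
    have hj : star a * a - z ∈ I := (Ideal.Quotient.eq).1 hz.symm
    obtain ⟨w, hwI, hw, hw1, hjw⟩ := I.exists_one_sub_mem_norm_mul_lt hj (half_pos hε)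
    -- `a * w` represents the same class as `a`, and `w` nearly annihilates `star a * a - z`.
    have haw : mk I (a * w) = mk I a := by
      rw [Ideal.Quotient.eq, show a * w - a = -(a * (1 - w)) by noncomm_ring]
      exact I.neg_mem (I.mul_mem_left a hwI)
    calc ‖mk I a‖ * ‖mk I a‖ ≤ ‖a * w‖ * ‖a * w‖ := by
          rw [← haw]
          exact mul_self_le_mul_self (norm_nonneg _) (Submodule.Quotient.norm_mk_le I (a * w))
      _ = ‖w * (star a * a * w)‖ := by
          rw [← CStarRing.norm_star_mul_self, star_mul, hw.star_eq]
          noncomm_ring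
      _ ≤ ‖star a * a * w‖ := (norm_mul_le _ _).trans (mul_le_of_le_one_left (norm_nonneg _) hw1)
      _ = ‖z * w + (star a * a - z) * w‖ := by noncomm_ring
      _ ≤ ‖z‖ + ε / 2 := (norm_add_le _ _).trans (add_le_add
          ((norm_mul_le _ _).trans (mul_le_of_le_one_right (norm_nonneg _) hw1)) hjw.le)
      _ ≤ ‖star (mk I a) * mk I a‖ + ε := by linarith

instance instCStarAlgebra : CStarAlgebra (A ⧸ I) where

end Quotient

variable {I}
variable {B : Type*} [CStarAlgebra B] {J : Ideal B} [J.IsTwoSided] [IsClosed (J : Set B)]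

def quotientStarMap (π : A →⋆ₙₐ[ℂ] B) (hπ : ∀ a ∈ I, π a ∈ J) : A ⧸ I →⋆ₙₐ[ℂ] B ⧸ J where
  toFun := Quotient.map' π fun a b h ↦ by
    rw [Submodule.quotientRel_def] at h ⊢
    simpa only [map_sub] using hπ _ h
  map_add' := by rintro ⟨a⟩ ⟨b⟩; exact congr_arg _ (map_add π a b)
  map_zero' := congr_arg _ (map_zero π)
  map_smul' := by rintro c ⟨a⟩; exact congr_arg _ (map_smul π c a)
  map_mul' := by rintro ⟨a⟩ ⟨b⟩; exact congr_arg _ (map_mul π a b)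
  map_star' := by rintro ⟨a⟩; exact congr_arg _ (map_star π a)

lemma quotientStarMap_mk (π : A →⋆ₙₐ[ℂ] B) (hπ : ∀ a ∈ I, π a ∈ J) (a : A) :
    quotientStarMap π hπ (Ideal.Quotient.mk I a) = Ideal.Quotient.mk J (π a) := rfl

lemma quotientStarMap_injective {π : A →⋆ₙₐ[ℂ] B} (hπ : ∀ a, a ∈ I ↔ π a ∈ J) :
    Function.Injective (quotientStarMap π fun a ↦ (hπ a).1) := by
  rintro ⟨a⟩ ⟨b⟩ h
  refine Ideal.Quotient.eq.2 ((hπ _).2 ?_)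
  simpa only [map_sub] using Ideal.Quotient.eq.1 h

theorem infDist_eq_infDist_map {π : A →⋆ₙₐ[ℂ] B} (hπ : ∀ a, a ∈ I ↔ π a ∈ J) (a : A) :
    infDist a I = infDist (π a) J := by
  rw [← Quotient.norm_mk_eq_infDist I, ← Quotient.norm_mk_eq_infDist J,
    ← quotientStarMap_mk π fun a ↦ (hπ a).1,
    NonUnitalStarAlgHom.norm_map _ (quotientStarMap_injective hπ)]

end Ideal

end

section FiberIdeal

lemma Set.mapsTo_closure_addSubmonoidClosure {M : Type*} [AddMonoid M] [TopologicalSpace M]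
    {G : Set M} {f : M →+ M} (hf : Continuous f) (hG : Set.MapsTo f G G) :
    Set.MapsTo f (closure (AddSubmonoid.closure G)) (closure (AddSubmonoid.closure G)) :=
  Set.MapsTo.closure (fun _ hg ↦ (AddSubmonoid.closure_le
    (S := (AddSubmonoid.closure G).comap f)).2 (fun _ hg ↦ AddSubmonoid.subset_closure (hG hg)) hg)
    hf

variable {X : Type*} [TopologicalSpace X] {A : Type*} [CStarAlgebra A]
  (Φ : C(X, ℂ) →⋆ₐ[ℂ] A) (hΦ : ∀ f : C(X, ℂ), ∀ a : A, Φ f * a = a * Φ f) (x : X)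

def fiberIdeal.toIdeal : Ideal A :=
  { (AddSubmonoid.closure
      {c : A | ∃ (f : C(X, ℂ)) (a : A), f x = 0 ∧ c = Φ f * a}).topologicalClosure with
    smul_mem' := fun c _ hs ↦ Set.mapsTo_closure_addSubmonoidClosure
      (f := AddMonoidHom.mulLeft c) (continuous_const_mul c)
      (by rintro _ ⟨f, a, hf, rfl⟩; exact ⟨f, c * a, hf, by simp [← mul_assoc, hΦ]⟩) hs }

instance : (fiberIdeal.toIdeal Φ hΦ x).IsTwoSided where
  mul_mem_of_left b hs := Set.mapsTo_closure_addSubmonoidClosure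
    (f := AddMonoidHom.mulRight b) (continuous_mul_const b)
    (by rintro _ ⟨f, a, hf, rfl⟩; exact ⟨f, a * b, hf, mul_assoc _ _ _⟩) hs

instance : IsClosed (fiberIdeal.toIdeal Φ hΦ x : Set A) := isClosed_closure

end FiberIdeal

theorem stmt12_general {X : Type*} [TopologicalSpace X]
    {A B : Type*} [CStarAlgebra A] [CStarAlgebra B]
    (ΦA : C(X, ℂ) →⋆ₐ[ℂ] A) (hΦA : ∀ f : C(X, ℂ), ∀ a : A, ΦA f * a = a * ΦA f)
    (ΦB : C(X, ℂ) →⋆ₐ[ℂ] B) (hΦB : ∀ f : C(X, ℂ), ∀ b : B, ΦB f * b = b * ΦB f)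
    (π : A →⋆ₙₐ[ℂ] B)
    (hπfaith : ∀ x : X, ∀ a : A, a ∈ fiberIdeal ΦA x ↔ π a ∈ fiberIdeal ΦB x)
    (hBcont : ∀ b : B, Continuous (fun x : X => Metric.infDist b (fiberIdeal ΦB x))) :
    ∀ a : A, Continuous (fun x : X => Metric.infDist a (fiberIdeal ΦA x)) := by
  intro a
  have hfibre (x : X) : infDist a (fiberIdeal ΦA x) = infDist (π a) (fiberIdeal ΦB x) :=
    Ideal.infDist_eq_infDist_map (I := fiberIdeal.toIdeal ΦA hΦA x)
      (J := fiberIdeal.toIdeal ΦB hΦB x) (hπfaith x) a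
  simpa only [hfibre] using hBcont (π a)

/-- Let `A` and `B` be unital `C(X)`-algebras over a compact Hausdorff space `X`, and
`π : A → B` a `C(X)`-linear `*`-homomorphism such that for every `x` and `a`,
`a ∈ I_x^A ↔ π(a) ∈ I_x^B` (so the induced representations of the fibres are well
defined and faithful).  If `B` is a continuous `C(X)`-algebra then so is `A`: all fibre
norm functions `x ↦ dist(a, I_x^A)` are continuous. -/
theorem stmt12 {X : Type*} [TopologicalSpace X] [CompactSpace X] [T2Space X]
    {A B : Type*} [CStarAlgebra A] [CStarAlgebra B]
    (ΦA : C(X, ℂ) →⋆ₐ[ℂ] A) (hΦA : ∀ f : C(X, ℂ), ∀ a : A, ΦA f * a = a * ΦA f)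
    (ΦB : C(X, ℂ) →⋆ₐ[ℂ] B) (hΦB : ∀ f : C(X, ℂ), ∀ b : B, ΦB f * b = b * ΦB f)
    (π : A →⋆ₙₐ[ℂ] B)
    (hπlin : ∀ f : C(X, ℂ), ∀ a : A, π (ΦA f * a) = ΦB f * π a)
    (hπfaith : ∀ x : X, ∀ a : A, a ∈ fiberIdeal ΦA x ↔ π a ∈ fiberIdeal ΦB x)
    (hBcont : ∀ b : B, Continuous (fun x : X => Metric.infDist b (fiberIdeal ΦB x))) :
    ∀ a : A, Continuous (fun x : X => Metric.infDist a (fiberIdeal ΦA x)) :=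
  stmt12_general ΦA hΦA ΦB hΦB π hπfaith hBcont
end
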